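/- arXiv:math/0512338 — 10 statements merged into one kernel-verified Lean document; each statement's English description precedes it below -/
import Mathlib

section
/- Every cycle of a polynomial map f ∈ ℤ[x] acting on ℤ has length at most 2; that is, if a ∈ ℤ is a periodic point of f of minimal period m, then m ≤ 2. -/
/-!
Since `x - y ∣ f x - f y`, each step `dₙ = f^[n+1] a - f^[n] a` of the orbit of `a` divides
the next one. Along a cycle the steps are periodic, so they all have the same absolute value.
If two consecutive steps cancel, `f^[n] a` has period 2, hence so has `a`. Otherwise all steps
are equal, the orbit is an arithmetic progression, and it can only return to `a` if it is
constant.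
-/

open Function

namespace Int

section DivisibilityPreserving

variable {F : ℤ → ℤ} (hF : ∀ x y, x - y ∣ F x - F y)
include hF

theorem sub_dvd_iterate_sub_iterate (n : ℕ) (x y : ℤ) : x - y ∣ F^[n] x - F^[n] y := by
  induction n generalizing x y with
  | zero => simp
  | succ n ih => exact (hF x y).trans (by simpa only [iterate_succ_apply] using ih (F x) (F y))

theorem natAbs_iterate_succ_sub_iterate {a : ℤ} {m : ℕ} (hm : 0 < m) (ha : IsPeriodicPt F m a)
    (n : ℕ) : (F^[n + 1] a - F^[n] a).natAbs = (F a - a).natAbs := by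
  have hreturn : F^[m * n] a = a := (ha.mul_const n).eq
  obtain ⟨k, hk⟩ := Nat.exists_eq_add_of_le (Nat.le_mul_of_pos_left n hm)
  symm
  apply natAbs_eq_of_dvd_dvd
  · simpa only [iterate_succ_apply] using sub_dvd_iterate_sub_iterate hF n (F a) a
  · have := sub_dvd_iterate_sub_iterate hF k (F^[n + 1] a) (F^[n] a)
    rwa [← iterate_add_apply, ← iterate_add_apply, ← add_assoc, add_comm k n, ← hk,
      iterate_succ_apply' F (m * n), hreturn] at this

theorem minimalPeriod_le_two {a : ℤ} (ha : a ∈ periodicPts F) : minimalPeriod F a ≤ 2 := by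
  obtain ⟨m, hm, hper⟩ := ha
  by_cases hcancel : ∃ n, F^[n + 2] a - F^[n + 1] a = -(F^[n + 1] a - F^[n] a)
  · obtain ⟨n, hn⟩ := hcancel
    have hperiod2 : IsPeriodicPt F 2 (F^[n] a) := by
      rw [IsPeriodicPt, IsFixedPt, ← iterate_add_apply, add_comm]
      linarith
    rw [← minimalPeriod_apply_iterate ⟨m, hm, hper⟩ n]
    exact hperiod2.minimalPeriod_le two_pos
  · push Not at hcancel
    have hstep : ∀ n, F^[n + 1] a - F^[n] a = F a - a := by
      intro n
      induction n with
      | zero => simp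
      | succ n ih =>
        have := natAbs_iterate_succ_sub_iterate hF hm hper (n + 1)
        rw [← natAbs_iterate_succ_sub_iterate hF hm hper n, natAbs_eq_natAbs_iff] at this
        exact ih ▸ this.resolve_right (hcancel n)
    have horbit : ∀ n : ℕ, F^[n] a = a + n * (F a - a) := by
      intro n
      induction n with
      | zero => simp
      | succ n ih => push_cast; linarith [hstep n]
    have hfixed : IsFixedPt F a := by
      have := horbit m
      rw [hper.eq, left_eq_add, mul_eq_zero, sub_eq_zero] at this
      exact this.resolve_left (by exact_mod_cast hm.ne')
    rw [minimalPeriod_eq_one_iff_isFixedPt.mpr hfixed]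
    norm_num

end DivisibilityPreserving

end Int

/-- Every cycle of a polynomial map `f ∈ ℤ[x]` acting on `ℤ` has length at most 2:
if `a` is a periodic point of `f` of minimal period `m`, then `m ≤ 2`. -/
theorem cycle_length_le_two (f : Polynomial ℤ) (a : ℤ) (m : ℕ) (hm : 0 < m)
    (hper : (fun x => f.eval x)^[m] a = a)
    (hmin : ∀ k : ℕ, 0 < k → (fun x => f.eval x)^[k] a = a → m ≤ k) :
    m ≤ 2 := by
  set F : ℤ → ℤ := fun x => f.eval x
  have ha : a ∈ periodicPts F := mk_mem_periodicPts hm hper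
  calc m ≤ minimalPeriod F a :=
        hmin _ (minimalPeriod_pos_of_mem_periodicPts ha) (isPeriodicPt_minimalPeriod F a)
    _ ≤ 2 := Int.minimalPeriod_le_two (fun x y => Polynomial.sub_dvd_eval_sub x y f) ha
end

section
/- Every finite forward orbit in ℤ of a polynomial f ∈ ℤ[x] has cardinality at most 6; that is, if a ∈ ℤ is a pre-periodic point of f, then the set {f^[n](a) : n ≥ 0} has at most 6 elements. -/
private lemma div_cancel' {x m n : ℤ} (hx : x ≠ 0) (h : x * m ∣ x * n) : m ∣ n :=
  (mul_dvd_mul_iff_left hx).mp h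

private lemma unit_pm {x : ℤ} (h : x ∣ 1) : x = 1 ∨ x = -1 :=
  Int.isUnit_iff.mp (isUnit_of_dvd_one h)

private lemma cyc_case (α β γ d : ℤ) (hα : α ≠ 0) (hβ : β ≠ 0) (hγ : γ ≠ 0) (hd : d ≠ 0)
    (hαd : α ≠ d) (hβd : β + d ≠ 0) (hγα : γ ≠ α)
    (C2 : β ∣ α) (C3 : α ∣ d) (C5 : (β + d) ∣ (α - d)) (C7 : (α - β - d) ∣ α)
    (C1 : γ ∣ β) (C6 : (β + d - γ) ∣ (α - β - d)) : False := by
  obtain ⟨p, hp⟩ := C2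
  obtain ⟨q, hq⟩ := C3
  subst hp
  subst hq
  have hp0 : p ≠ 0 := by rintro rfl; simp at hα
  have hq0 : q ≠ 0 := by rintro rfl; simp at hd
  have hq1 : q ≠ 1 := by rintro rfl; simp at hαd
  rw [show β * p - β - β * p * q = β * (p - 1 - p * q) by ring] at C7
  have hX : (p - 1 - p * q) ∣ p := div_cancel' hβ C7
  have hX1 : (p - 1 - p * q) ∣ 1 := by
    have h1 := dvd_add (dvd_refl (p - 1 - p * q)) (hX.mul_right (q - 1))
    rw [show p - 1 - p * q + p * (q - 1) = -1 by ring] at h1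
    exact (dvd_neg.mp h1)
  have hpq : p * (q - 1) = -2 := by
    rcases unit_pm hX1 with h | h
    · linear_combination -h
    · exfalso
      rcases mul_eq_zero.mp (show p * (1 - q) = 0 by linear_combination h) with h' | h'
      · exact hp0 h'
      · exact hq1 (by omega)
  have hdv2 : p ∣ (2:ℤ) := ⟨1 - q, by linarith⟩
  have hle : p ≤ 2 := Int.le_of_dvd (by norm_num) hdv2
  have hge : -2 ≤ p := by
    have := Int.le_of_dvd (by norm_num : (0:ℤ) < 2) (neg_dvd.mpr hdv2); omega
  interval_cases p
  · -- p = -2, q = 2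
    have hq2 : q = 2 := by omega
    subst hq2
    rw [show β + β * (-2) * 2 = β * (-3) by ring,
        show β * (-2) - β * (-2) * 2 = β * 2 by ring] at C5
    have := div_cancel' hβ C5
    norm_num at this
  · -- p = -1, q = 3
    have hq3 : q = 3 := by omega
    subst hq3
    obtain ⟨r, hr⟩ := C1
    subst hr
    have hr0 : r ≠ 0 := by rintro rfl; simp at hβ
    have hr1 : r ≠ -1 := by rintro rfl; apply hγα; ring
    rw [show γ * r + γ * r * (-1) * 3 - γ = γ * (-2 * r - 1) by ring,
        show γ * r * (-1) - γ * r - γ * r * (-1) * 3 = γ * r by ring] at C6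
    have hY : (-2 * r - 1) ∣ r := div_cancel' hγ C6
    have hY1 : (-2 * r - 1) ∣ 1 := by
      have h1 := dvd_add (dvd_refl (-2 * r - 1)) (hY.mul_left 2)
      rw [show -2 * r - 1 + 2 * r = -1 by ring] at h1
      exact dvd_neg.mp h1
    rcases unit_pm hY1 with h | h <;> omega
  · exact hp0 rfl
  · -- p = 1, q = -1
    have hqm : q = -1 := by omega
    subst hqm
    apply hβd; ring
  · -- p = 2, q = 0
    apply hq0; omega

private lemma two_step {x y : ℤ} (hx : x ≠ 0) (hy : y ≠ 0)
    (h1 : x ∣ y) (h2 : (y - x) ∣ y) : y = 2 * x := by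
  obtain ⟨m, hm⟩ := h1
  subst hm
  rw [show x * m - x = x * (m - 1) by ring] at h2
  have hm' : (m - 1) ∣ m := div_cancel' hx h2
  have hone : (m - 1) ∣ 1 := by
    have := dvd_sub hm' (dvd_refl (m - 1))
    rwa [show m - (m - 1) = 1 by ring] at this
  rcases unit_pm hone with h | h
  · rw [show m = 2 by omega]; ring
  · exfalso; apply hy; rw [show m = 0 by omega, mul_zero]

private lemma fix_case (u v w : ℤ) (hu : u ≠ 0) (hv : v ≠ 0) (hw : w ≠ 0)
    (h2 : u ∣ v) (h3 : v ∣ w) (h4 : (v - w) ∣ w) (h5 : (v - u) ∣ (w - v))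
    (h6 : (u - w) ∣ v) : False := by
  have hw2 : w = 2 * v := by
    refine two_step hv hw h3 ?_
    have := neg_dvd.mpr h4; rwa [neg_sub] at this
  have hv2 : v = 2 * u := by
    refine two_step hu hv h2 ?_
    rwa [show w - v = v by omega] at h5
  obtain ⟨e, he⟩ := h6
  rw [show u - w = u * (-3) by omega, hv2] at he
  have : u * 2 = u * (-3 * e) := by linear_combination he
  have := mul_left_cancel₀ hu this
  omega

section
variable (A : ℕ → ℤ)

private lemma step_eq (hdvd : ∀ m n : ℕ, A m - A n ∣ A (m+1) - A (n+1))
    {m n : ℕ} (h : A m = A n) : A (m+1) = A (n+1) := by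
  have := hdvd m n
  rw [h, sub_self] at this
  have := zero_dvd_iff.mp this
  linarith

private lemma shift_eq (hdvd : ∀ m n : ℕ, A m - A n ∣ A (m+1) - A (n+1))
    {m n : ℕ} (h : A m = A n) : ∀ t, A (m+t) = A (n+t) := by
  intro t
  induction t with
  | zero => simpa using h
  | succ t ih => exact step_eq A hdvd ih

private lemma per1 (hdvd : ∀ m n : ℕ, A m - A n ∣ A (m+1) - A (n+1))
    {i q : ℕ} (h : A (i + q) = A i) : ∀ n, i ≤ n → A (n + q) = A n := by
  intro n hn
  obtain ⟨s, rfl⟩ := Nat.exists_eq_add_of_le hn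
  have := shift_eq A hdvd h s
  rw [show i + q + s = i + s + q by ring] at this
  exact this

private lemma pert (hdvd : ∀ m n : ℕ, A m - A n ∣ A (m+1) - A (n+1))
    {i q : ℕ} (h : A (i + q) = A i) : ∀ n, i ≤ n → ∀ t, A (n + t * q) = A n := by
  intro n hn t
  induction t with
  | zero => simp
  | succ t ih =>
    rw [show n + (t+1) * q = (n + t * q) + q by ring]
    rw [per1 A hdvd h (n + t * q) (le_trans hn (Nat.le_add_right _ _))]
    exact ih

private lemma chain_dvd (hdvd : ∀ m n : ℕ, A m - A n ∣ A (m+1) - A (n+1)) :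
    ∀ n t, (A (n+1) - A n) ∣ (A (n+t+1) - A (n+t)) := by
  intro n t
  induction t with
  | zero => exact dvd_rfl
  | succ t ih => exact dvd_trans ih (hdvd (n+t+1) (n+t))

private lemma ev_two (hdvd : ∀ m n : ℕ, A m - A n ∣ A (m+1) - A (n+1))
    (hfin : (Set.range A).Finite) : ∃ m, A (m + 2) = A m := by
  -- find a repetition
  have hni : ¬ Function.Injective A := by
    intro hinj
    exact Set.infinite_range_of_injective hinj hfin
  rw [Function.not_injective_iff] at hni
  obtain ⟨x, y, hxy, hne⟩ := hni
  have hrep : ∃ i q, 0 < q ∧ A (i + q) = A i := by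
    rcases Nat.lt_or_ge x y with h | h
    · exact ⟨x, y - x, by omega, by rw [show x + (y - x) = y by omega]; exact hxy.symm⟩
    · exact ⟨y, x - y, by omega, by rw [show y + (x - y) = x by omega]; exact hxy⟩
  obtain ⟨i, q, hq, hiq⟩ := hrep
  by_cases h1 : ∃ n, A (n + 1) = A n
  · obtain ⟨n, hn⟩ := h1
    refine ⟨n, ?_⟩
    have := step_eq A hdvd hn
    rw [hn] at this
    exact this
  · push_neg at h1
    by_cases h2 : ∃ n, i ≤ n ∧ A (n + 2) = A n
    · obtain ⟨n, _, h⟩ := h2; exact ⟨n, h⟩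
    exfalso
    push_neg at h2
    -- differences are eventually constant
    have hconst : ∀ n, i ≤ n → A (n+2) - A (n+1) = A (n+1) - A n := by
      intro n hn
      have d1 : (A (n+1) - A n) ∣ (A (n+2) - A (n+1)) := hdvd (n+1) n
      have d2 : (A (n+2) - A (n+1)) ∣ (A (n+1) - A n) := by
        have hch := chain_dvd A hdvd (n+1) (q-1)
        rw [show n + 1 + (q-1) + 1 = n + 1 + q by omega,
            show n + 1 + (q-1) = n + q by omega] at hch
        rwa [per1 A hdvd hiq (n+1) (by omega),
             per1 A hdvd hiq n hn] at hch
      have hc0 : A (n+1) - A n ≠ 0 := sub_ne_zero.mpr (h1 n)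
      obtain ⟨e, he⟩ := d1
      obtain ⟨e', he'⟩ := d2
      rw [he, mul_assoc] at he'
      have hee : e * e' = 1 := by
        have := mul_left_cancel₀ hc0 (by linarith [he'] : (A (n+1) - A n) * 1 = (A (n+1) - A n) * (e * e'))
        omega
      rcases Int.eq_one_or_neg_one_of_mul_eq_one hee with h | h
      · rw [he, h, mul_one]
      · exfalso
        apply h2 n hn
        rw [h] at he
        linarith
    -- linear growth
    have hlin : ∀ t, A (i + t) = A i + t * (A (i+1) - A i) := by
      intro t
      induction t with
      | zero => simp
      | succ t ih =>
        have hstep : A (i + t + 1) - A (i + t) = A (i + 1) - A i := by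
          clear ih
          induction t with
          | zero => rfl
          | succ t ih =>
            have h := hconst (i + t) (Nat.le_add_right _ _)
            rw [show i + (t+1) + 1 = i + t + 2 by ring, show i + (t+1) = i + t + 1 by ring, h]
            exact ih
        have : A (i + (t+1)) = A (i + t) + (A (i+1) - A i) := by
          rw [show i + (t+1) = i + t + 1 by ring]
          linarith [hstep]
        rw [this, ih]
        push_cast
        ring
    have := hlin q
    rw [hiq] at this
    have hq0 : (q : ℤ) * (A (i+1) - A i) = 0 := by linarith
    rcases mul_eq_zero.mp hq0 with h | h
    · have : q = 0 := by exact_mod_cast h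
      omega
    · exact h1 i (by linarith)
end

private lemma orbit_aux (A : ℕ → ℤ) (hdvd : ∀ m n : ℕ, A m - A n ∣ A (m+1) - A (n+1))
    (hfin : (Set.range A).Finite) : ∀ n, 2 ≤ n → A (n + 2) = A n := by
  obtain ⟨m, hm⟩ := ev_two A hdvd hfin
  have hprop : ∀ m, A (m+2) = A m → ∀ n, m ≤ n → A (n+2) = A n := by
    intro m hm n hn
    obtain ⟨s, rfl⟩ := Nat.exists_eq_add_of_le hn
    have := shift_eq A hdvd hm s
    rwa [show m + 2 + s = m + s + 2 by ring] at this
  classical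
  have hex : ∃ k, ∀ n, k ≤ n → A (n+2) = A n := ⟨m, hprop m hm⟩
  obtain ⟨k, hk, hmin⟩ : ∃ k, (∀ n, k ≤ n → A (n+2) = A n) ∧
      ∀ i, i < k → ¬(∀ n, i ≤ n → A (n+2) = A n) :=
    ⟨Nat.find hex, Nat.find_spec hex, fun i hi => Nat.find_min hex hi⟩
  suffices hks : k ≤ 2 by intro n hn; exact hk n (le_trans hks hn)
  by_contra hk3
  push_neg at hk3
  have hnot : ∀ i, i < k → A (i+2) ≠ A i := by
    intro i hi hcon
    exact hmin i hi (hprop i hcon)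
  have hdist : ∀ i j, i < k → i < j → A i ≠ A j := by
    intro i j hik hij h
    have hq : 0 < j - i := by omega
    have hiq : A (i + (j - i)) = A i := by rw [show i + (j-i) = j by omega]; exact h.symm
    apply hnot i hik
    have e1 : A (i + 2 + k * (j-i)) = A (i+2) := pert A hdvd hiq (i+2) (by omega) k
    have e2 : A (i + k * (j-i)) = A i := pert A hdvd hiq i (le_refl i) k
    have hge : k ≤ i + k * (j - i) := by
      have : k * 1 ≤ k * (j - i) := Nat.mul_le_mul_left k hq
      omega
    have e3 := hk (i + k * (j-i)) hge
    rw [show i + k * (j-i) + 2 = i + 2 + k * (j-i) by ring] at e3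
    rw [← e1, e3, e2]
  obtain ⟨m0, rfl⟩ : ∃ m0, k = m0 + 3 := ⟨k - 3, by omega⟩
  have hb2 : A (m0 + 5) = A (m0 + 3) := by
    have := hk (m0+3) (le_refl _); rwa [show m0+3+2 = m0+5 by ring] at this
  have hc2 : A (m0 + 6) = A (m0 + 4) := by
    have := hk (m0+4) (by omega); rwa [show m0+4+2 = m0+6 by ring] at this
  have hd30 : A m0 ≠ A (m0+3) := hdist m0 (m0+3) (by omega) (by omega)
  have hd13 : A (m0+1) ≠ A (m0+3) := hdist (m0+1) (m0+3) (by omega) (by omega)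
  have hd23 : A (m0+2) ≠ A (m0+3) := hdist (m0+2) (m0+3) (by omega) (by omega)
  by_cases hbc : A (m0 + 4) = A (m0 + 3)
  · -- tail into a fixed point
    have H2 : (A m0 - A (m0+3)) ∣ (A (m0+1) - A (m0+3)) := by
      have := hdvd m0 (m0+3)
      rwa [show m0+3+1 = m0+4 by ring, show m0+1 = m0+1 from rfl, hbc] at this
    have H3 : (A (m0+1) - A (m0+3)) ∣ (A (m0+2) - A (m0+3)) := by
      have := hdvd (m0+1) (m0+3)
      rwa [show m0+1+1 = m0+2 by ring, show m0+3+1 = m0+4 by ring, hbc] at this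
    have H4 : ((A (m0+1) - A (m0+3)) - (A (m0+2) - A (m0+3))) ∣ (A (m0+2) - A (m0+3)) := by
      rw [sub_sub_sub_cancel_right]
      have := hdvd (m0+1) (m0+2)
      rwa [show m0+1+1 = m0+2 by ring, show m0+2+1 = m0+3 by ring] at this
    have H5 : ((A (m0+1) - A (m0+3)) - (A m0 - A (m0+3))) ∣
        ((A (m0+2) - A (m0+3)) - (A (m0+1) - A (m0+3))) := by
      rw [sub_sub_sub_cancel_right, sub_sub_sub_cancel_right]
      have := hdvd (m0+1) m0
      rwa [show m0+1+1 = m0+2 by ring] at this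
    have H6 : ((A m0 - A (m0+3)) - (A (m0+2) - A (m0+3))) ∣ (A (m0+1) - A (m0+3)) := by
      rw [sub_sub_sub_cancel_right]
      have := hdvd m0 (m0+2)
      rwa [show m0+2+1 = m0+3 by ring] at this
    exact fix_case _ _ _ (sub_ne_zero.mpr hd30) (sub_ne_zero.mpr hd13) (sub_ne_zero.mpr hd23)
      H2 H3 H4 H5 H6
  · -- tail into a 2-cycle
    have hd14 : A (m0+1) ≠ A (m0+4) := hdist (m0+1) (m0+4) (by omega) (by omega)
    have hd24 : A (m0+2) ≠ A (m0+4) := hdist (m0+2) (m0+4) (by omega) (by omega)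
    have hd02 : A m0 ≠ A (m0+2) := hdist m0 (m0+2) (by omega) (by omega)
    have hd12 : A (m0+1) ≠ A (m0+2) := hdist (m0+1) (m0+2) (by omega) (by omega)
    have hd01 : A m0 ≠ A (m0+1) := hdist m0 (m0+1) (by omega) (by omega)
    refine cyc_case (A (m0+2) - A (m0+3)) (A (m0+1) - A (m0+4)) (A m0 - A (m0+3))
      (A (m0+4) - A (m0+3))
      (sub_ne_zero.mpr hd23) (sub_ne_zero.mpr hd14) (sub_ne_zero.mpr hd30)
      (sub_ne_zero.mpr hbc) ?_ ?_ ?_ ?_ ?_ ?_ ?_ ?_ ?_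
    · intro h; exact hd24 (by linarith)
    · intro h; exact hd13 (by linarith)
    · intro h; exact hd02 (by linarith)
    · -- C2 : β ∣ α
      have := hdvd (m0+1) (m0+4)
      rwa [show m0+1+1 = m0+2 by ring, show m0+4+1 = m0+5 by ring, hb2] at this
    · -- C3 : α ∣ d
      have := hdvd (m0+2) (m0+3)
      rw [show m0+2+1 = m0+3 by ring, show m0+3+1 = m0+4 by ring] at this
      rw [show A (m0+4) - A (m0+3) = -(A (m0+3) - A (m0+4)) by ring]
      exact dvd_neg.mpr this
    · -- C5
      rw [show A (m0+1) - A (m0+4) + (A (m0+4) - A (m0+3)) = A (m0+1) - A (m0+3) by ring,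
          show A (m0+2) - A (m0+3) - (A (m0+4) - A (m0+3)) = A (m0+2) - A (m0+4) by ring]
      have := hdvd (m0+1) (m0+3)
      rwa [show m0+1+1 = m0+2 by ring, show m0+3+1 = m0+4 by ring] at this
    · -- C7
      rw [show A (m0+2) - A (m0+3) - (A (m0+1) - A (m0+4)) - (A (m0+4) - A (m0+3))
            = A (m0+2) - A (m0+1) by ring,
          show A (m0+2) - A (m0+3) = -(A (m0+3) - A (m0+2)) by ring]
      refine dvd_neg.mpr ?_
      have := hdvd (m0+2) (m0+1)
      rwa [show m0+2+1 = m0+3 by ring, show m0+1+1 = m0+2 by ring] at this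
    · -- C1 : γ ∣ β
      have := hdvd m0 (m0+5)
      rwa [show m0+5+1 = m0+6 by ring, hb2, hc2] at this
    · -- C6
      rw [show A (m0+1) - A (m0+4) + (A (m0+4) - A (m0+3)) - (A m0 - A (m0+3))
            = A (m0+1) - A m0 by ring,
          show A (m0+2) - A (m0+3) - (A (m0+1) - A (m0+4)) - (A (m0+4) - A (m0+3))
            = A (m0+2) - A (m0+1) by ring]
      have := hdvd (m0+1) m0
      rwa [show m0+1+1 = m0+2 by ring] at this

/-- Every finite forward orbit in `ℤ` of a polynomial `f ∈ ℤ[x]` has cardinality at most 6. -/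
theorem finite_orbit_card_le_six (f : Polynomial ℤ) (a : ℤ)
    (hfin : (Set.range fun n : ℕ => (fun x => f.eval x)^[n] a).Finite) :
    (Set.range fun n : ℕ => (fun x => f.eval x)^[n] a).ncard ≤ 6 := by
  set A : ℕ → ℤ := fun n : ℕ => (fun x => f.eval x)^[n] a with hA
  have hdvd : ∀ m n : ℕ, A m - A n ∣ A (m+1) - A (n+1) := by
    intro m n
    have h1 : A (m+1) = f.eval (A m) := Function.iterate_succ_apply' _ _ _
    have h2 : A (n+1) = f.eval (A n) := Function.iterate_succ_apply' _ _ _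
    rw [h1, h2]
    exact Polynomial.sub_dvd_eval_sub _ _ f
  have hk := orbit_aux A hdvd hfin
  have hmem : ∀ n, A n ∈ ({A 0, A 1, A 2, A 3} : Set ℤ) := by
    intro n
    induction n using Nat.strong_induction_on with
    | _ n ih =>
      by_cases hn : n ≤ 3
      · interval_cases n <;> simp [Set.mem_insert_iff]
      · have h4 : 4 ≤ n := by omega
        have : A (n - 2 + 2) = A (n - 2) := hk (n - 2) (by omega)
        rw [show n - 2 + 2 = n by omega] at this
        rw [this]
        exact ih (n - 2) (by omega)
  have hsub : Set.range A ⊆ ({A 0, A 1, A 2, A 3} : Set ℤ) := by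
    rintro x ⟨n, rfl⟩
    exact hmem n
  have hcard : ({A 0, A 1, A 2, A 3} : Set ℤ).ncard ≤ 4 := by
    refine le_trans (Set.ncard_insert_le _ _) ?_
    have : ({A 1, A 2, A 3} : Set ℤ).ncard ≤ 3 := by
      refine le_trans (Set.ncard_insert_le _ _) ?_
      have : ({A 2, A 3} : Set ℤ).ncard ≤ 2 := by
        refine le_trans (Set.ncard_insert_le _ _) ?_
        simp [Set.ncard_singleton]
      omega
    omega
  have := Set.ncard_le_ncard hsub (Set.toFinite _)
  omega
end

section
/- Let v be a discrete valuation on a field K. The v-adic logarithmic distance δ_v on ℙ¹(K) satisfies the triangle-type inequality δ_v(P₁,P₃) ≥ min(δ_v(P₁,P₂), δ_v(P₂,P₃)) for all P₁, P₂, P₃ ∈ ℙ¹(K). -/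
/-!
Write `m(P) = min (v x, v y)` and `D(P, Q) = x_P y_Q - x_Q y_P`. The Plücker-type identities
`x₁ D(P₂,P₃) + x₃ D(P₁,P₂) = x₂ D(P₁,P₃)` (and the same with `y`) together with the ultrametric
inequality give `min (m(P₁) + v D(P₂,P₃), m(P₃) + v D(P₁,P₂)) ≤ m(P₂) + v D(P₁,P₃)`, using the
coordinate of `P₂` at which `m(P₂)` is attained. Subtracting `m(P₁) + m(P₂) + m(P₃)`, which is
finite for nonzero points, is exactly the claimed inequality.
-/

/-- The `v`-adic logarithmic distance between two points of `ℙ¹(K)` given in homogeneous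
coordinates: `δ_v(P,Q) = v(x₁y₂ - x₂y₁) - min(v x₁, v y₁) - min(v x₂, v y₂)`. -/
noncomputable def logDist {K : Type*} [Field K] (v : K → WithTop ℤ) (P Q : K × K) : WithTop ℤ :=
  v (P.1 * Q.2 - Q.1 * P.2) - min (v P.1) (v P.2) - min (v Q.1) (v Q.2)

namespace WithTop

open LinearOrderedAddCommGroupWithTop

lemma sub_coe_sub_coe_eq (x : WithTop ℤ) (k s : ℤ) {m n : ℤ} (h : k + m + n = s) :
    x - m - n = ↑k + x - ↑s := by
  subst h
  induction x using recTopCoe with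
  | top => simp
  | coe x => norm_cast; ring

lemma min_sub_sub_le_sub_sub {a b c : WithTop ℤ} {m₁ m₂ m₃ : ℤ}
    (h : min (↑m₁ + c) (↑m₃ + b) ≤ ↑m₂ + a) :
    min (b - m₁ - m₂) (c - m₂ - m₃) ≤ a - m₁ - m₃ := by
  set s := m₁ + m₂ + m₃
  have hs : (s : WithTop ℤ) ≠ ⊤ := coe_ne_top
  calc min (b - m₁ - m₂) (c - m₂ - m₃)
      = min (↑m₃ + b - s) (↑m₁ + c - s) := by
        rw [sub_coe_sub_coe_eq b m₃ s (by ring), sub_coe_sub_coe_eq c m₁ s (by ring)]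
    _ = min (↑m₁ + c) (↑m₃ + b) - s := by
        rw [min_comm, (sub_left_strictMono_of_ne_top hs).monotone.map_min]
    _ ≤ ↑m₂ + a - s := (sub_le_sub_iff_left_of_ne_top hs).2 h
    _ = a - m₁ - m₃ := (sub_coe_sub_coe_eq a m₂ s (by ring)).symm

end WithTop

section

variable {R : Type*} [CommRing R] {v : R → WithTop ℤ}

lemma min_valuation_ne_top (hv0 : ∀ x : R, v x = ⊤ → x = 0) {P : R × R} (hP : P ≠ 0) :
    min (v P.1) (v P.2) ≠ ⊤ := fun h ↦
  hP (Prod.ext (hv0 _ (min_eq_top.1 h).1) (hv0 _ (min_eq_top.1 h).2))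

lemma min_add_le_of_mul_add_mul (hvmul : ∀ x y : R, v (x * y) = v x + v y)
    (hvadd : ∀ x y : R, min (v x) (v y) ≤ v (x + y)) {a b c d e f : R}
    (h : a * d + b * e = c * f) {m n : WithTop ℤ} (hm : m ≤ v a) (hn : n ≤ v b) :
    min (m + v d) (n + v e) ≤ v c + v f :=
  calc min (m + v d) (n + v e) ≤ min (v a + v d) (v b + v e) :=
        min_le_min (add_le_add_left hm _) (add_le_add_left hn _)
    _ ≤ v c + v f := by rw [← hvmul, ← hvmul, ← hvmul, ← h]; exact hvadd _ _

lemma min_add_valuation_cross_le (hvmul : ∀ x y : R, v (x * y) = v x + v y)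
    (hvadd : ∀ x y : R, min (v x) (v y) ≤ v (x + y)) (P₁ P₂ P₃ : R × R) :
    min (min (v P₁.1) (v P₁.2) + v (P₂.1 * P₃.2 - P₃.1 * P₂.2))
        (min (v P₃.1) (v P₃.2) + v (P₁.1 * P₂.2 - P₂.1 * P₁.2)) ≤
      min (v P₂.1) (v P₂.2) + v (P₁.1 * P₃.2 - P₃.1 * P₁.2) := by
  rcases min_choice (v P₂.1) (v P₂.2) with hx | hy
  · rw [hx]
    exact min_add_le_of_mul_add_mul hvmul hvadd (by ring) (min_le_left _ _) (min_le_left _ _)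
  · rw [hy]
    exact min_add_le_of_mul_add_mul hvmul hvadd (by ring) (min_le_right _ _) (min_le_right _ _)

end

theorem logDist_triangle_general {K : Type*} [Field K] (v : K → WithTop ℤ)
    (hv0 : ∀ x : K, v x = ⊤ ↔ x = 0)
    (hvmul : ∀ x y : K, v (x * y) = v x + v y)
    (hvadd : ∀ x y : K, min (v x) (v y) ≤ v (x + y))
    (P₁ P₂ P₃ : K × K) (h₁ : P₁ ≠ 0) (h₂ : P₂ ≠ 0) (h₃ : P₃ ≠ 0) :
    min (logDist v P₁ P₂) (logDist v P₂ P₃) ≤ logDist v P₁ P₃ := by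
  have hmin {P : K × K} (hP : P ≠ 0) : ∃ n : ℤ, min (v P.1) (v P.2) = n :=
    (WithTop.ne_top_iff_exists.1 (min_valuation_ne_top (fun x ↦ (hv0 x).1) hP)).imp
      fun _ h ↦ h.symm
  obtain ⟨n₁, hn₁⟩ := hmin h₁
  obtain ⟨n₂, hn₂⟩ := hmin h₂
  obtain ⟨n₃, hn₃⟩ := hmin h₃
  have key := min_add_valuation_cross_le hvmul hvadd P₁ P₂ P₃
  rw [hn₁, hn₂, hn₃] at key
  unfold logDist
  rw [hn₁, hn₂, hn₃]
  exact WithTop.min_sub_sub_le_sub_sub key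

/-- The `v`-adic logarithmic distance satisfies the ultrametric triangle-type inequality
`δ_v(P₁,P₃) ≥ min (δ_v(P₁,P₂), δ_v(P₂,P₃))`. -/
theorem logDist_triangle {K : Type*} [Field K] (v : K → WithTop ℤ)
    (hv0 : ∀ x : K, v x = ⊤ ↔ x = 0)
    (hvmul : ∀ x y : K, v (x * y) = v x + v y)
    (hvadd : ∀ x y : K, min (v x) (v y) ≤ v (x + y))
    (hvsurj : ∀ n : ℤ, ∃ x : K, v x = (n : WithTop ℤ))
    (P₁ P₂ P₃ : K × K) (h₁ : P₁ ≠ 0) (h₂ : P₂ ≠ 0) (h₃ : P₃ ≠ 0) :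
    min (logDist v P₁ P₂) (logDist v P₂ P₃) ≤ logDist v P₁ P₃ :=
  logDist_triangle_general v hv0 hvmul hvadd P₁ P₂ P₃ h₁ h₂ h₃
end

section
/- Let v be a discrete valuation on a field K with valuation ring O_v, and let F, G ∈ O_v[X,Y] be homogeneous polynomials of the same degree d ≥ 1 whose resultant Res(F,G) is a unit of O_v. Then the induced map Φ([x:y]) = [F(x,y):G(x,y)] on ℙ¹(K) satisfies δ_v(Φ(P), Φ(Q)) ≥ δ_v(P,Q) for all P, Q ∈ ℙ¹(K). -/
/-- Evaluation of the homogeneous form of degree `d` with coefficient list `a`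
(`F(X,Y) = ∑ a i · Xⁱ · Y^(d-i)`) at a point `(x,y)`. -/
noncomputable def homEval {K : Type*} [Field K] (d : ℕ) (a : Fin (d + 1) → K) (x y : K) : K :=
  ∑ i : Fin (d + 1), a i * x ^ (i : ℕ) * y ^ (d - (i : ℕ))

/-- The Sylvester matrix of two homogeneous binary forms of degree `d` given by their
coefficient lists, whose determinant is the resultant `Res(F,G)`. -/
def sylvester {K : Type*} [Field K] (d : ℕ) (a b : Fin (d + 1) → K) :
    Matrix (Fin (d + d)) (Fin (d + d)) K :=
  Matrix.of fun i j =>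
    if (i : ℕ) < d then
      if h : (i : ℕ) ≤ (j : ℕ) ∧ (j : ℕ) ≤ (i : ℕ) + d then
        a ⟨(j : ℕ) - (i : ℕ), by omega⟩ else 0
    else
      if h : (i : ℕ) - d ≤ (j : ℕ) ∧ (j : ℕ) ≤ (i : ℕ) then
        b ⟨(j : ℕ) - ((i : ℕ) - d), by omega⟩ else 0


section Helpers

variable {K : Type*} [Field K] (v : K → WithTop ℤ)

lemma v_zero' (hv0 : ∀ x : K, v x = ⊤ ↔ x = 0) : v 0 = ⊤ := (hv0 0).mpr rfl

lemma v_one' (hv0 : ∀ x : K, v x = ⊤ ↔ x = 0)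
    (hvmul : ∀ x y : K, v (x * y) = v x + v y) : v (1 : K) = 0 := by
  have h := hvmul 1 1
  rw [one_mul] at h
  cases hv : v (1 : K) with
  | top => exact absurd ((hv0 1).mp hv) one_ne_zero
  | coe z =>
    rw [hv, ← WithTop.coe_add, WithTop.coe_eq_coe] at h
    have hz : z = 0 := by omega
    subst hz; rfl

lemma v_neg' (hv0 : ∀ x : K, v x = ⊤ ↔ x = 0)
    (hvmul : ∀ x y : K, v (x * y) = v x + v y) (x : K) : v (-x) = v x := by
  have hm1 : v (-1 : K) = 0 := by
    have h := hvmul (-1) (-1)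
    rw [neg_mul_neg, one_mul, v_one' v hv0 hvmul] at h
    cases hv : v (-1 : K) with
    | top => exact absurd ((hv0 (-1)).mp hv) (by norm_num)
    | coe z =>
      rw [hv, ← WithTop.coe_add] at h
      have h' : (0 : ℤ) = z + z := by exact_mod_cast h
      have hz : z = 0 := by omega
      subst hz; rfl
  calc v (-x) = v ((-1) * x) := by rw [neg_one_mul]
    _ = v (-1 : K) + v x := hvmul _ _
    _ = v x := by rw [hm1, zero_add]

lemma v_sub' (hv0 : ∀ x : K, v x = ⊤ ↔ x = 0)
    (hvmul : ∀ x y : K, v (x * y) = v x + v y)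
    (hvadd : ∀ x y : K, min (v x) (v y) ≤ v (x + y)) (x y : K) :
    min (v x) (v y) ≤ v (x - y) := by
  have := hvadd x (-y)
  rwa [v_neg' v hv0 hvmul y, ← sub_eq_add_neg] at this

lemma v_pow' (hv0 : ∀ x : K, v x = ⊤ ↔ x = 0)
    (hvmul : ∀ x y : K, v (x * y) = v x + v y) (x : K) (n : ℕ) :
    v (x ^ n) = n • v x := by
  induction n with
  | zero => simpa using v_one' v hv0 hvmul
  | succ n ih => rw [pow_succ, hvmul, ih, succ_nsmul]

lemma v_pow_le' (hv0 : ∀ x : K, v x = ⊤ ↔ x = 0)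
    (hvmul : ∀ x y : K, v (x * y) = v x + v y) {m : WithTop ℤ} {x : K}
    (h : m ≤ v x) (n : ℕ) : n • m ≤ v (x ^ n) := by
  rw [v_pow' v hv0 hvmul]; exact nsmul_le_nsmul_right h n

lemma v_mul_le' (hvmul : ∀ x y : K, v (x * y) = v x + v y)
    {m₁ m₂ : WithTop ℤ} {x y : K} (h₁ : m₁ ≤ v x) (h₂ : m₂ ≤ v y) :
    m₁ + m₂ ≤ v (x * y) := by
  rw [hvmul]; exact add_le_add h₁ h₂

lemma v_sum_le' (hv0 : ∀ x : K, v x = ⊤ ↔ x = 0)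
    (hvadd : ∀ x y : K, min (v x) (v y) ≤ v (x + y))
    {ι : Type*} (s : Finset ι) (f : ι → K) (c : WithTop ℤ)
    (h : ∀ i ∈ s, c ≤ v (f i)) : c ≤ v (∑ i ∈ s, f i) := by
  classical
  induction s using Finset.induction_on with
  | empty => simp [v_zero' v hv0]
  | @insert i s hnot ih =>
    rw [Finset.sum_insert hnot]
    refine le_trans ?_ (hvadd _ _)
    exact le_min (h i (Finset.mem_insert_self i s))
      (ih fun j hj => h j (Finset.mem_insert_of_mem hj))

/-- The valuation subring: elements of nonnegative valuation. -/
def vRing (hv0 : ∀ x : K, v x = ⊤ ↔ x = 0)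
    (hvmul : ∀ x y : K, v (x * y) = v x + v y)
    (hvadd : ∀ x y : K, min (v x) (v y) ≤ v (x + y)) : Subring K where
  carrier := {x | 0 ≤ v x}
  zero_mem' := by simp [Set.mem_setOf_eq, v_zero' v hv0]
  one_mem' := by simp [Set.mem_setOf_eq, v_one' v hv0 hvmul]
  add_mem' := by
    intro x y hx hy
    show (0 : WithTop ℤ) ≤ v (x + y)
    exact le_trans (le_min hx hy) (hvadd x y)
  mul_mem' := by
    intro x y hx hy
    show (0 : WithTop ℤ) ≤ v (x * y)
    rw [hvmul]
    have hx' : (0 : WithTop ℤ) ≤ v x := hx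
    have hy' : (0 : WithTop ℤ) ≤ v y := hy
    simpa using add_le_add hx' hy'
  neg_mem' := by
    intro x hx
    show (0 : WithTop ℤ) ≤ v (-x)
    rw [v_neg' v hv0 hvmul]
    exact hx

lemma v_adj_det_nonneg' (hv0 : ∀ x : K, v x = ⊤ ↔ x = 0)
    (hvmul : ∀ x y : K, v (x * y) = v x + v y)
    (hvadd : ∀ x y : K, min (v x) (v y) ≤ v (x + y))
    {n : ℕ} (M : Matrix (Fin n) (Fin n) K) (hM : ∀ i j, 0 ≤ v (M i j)) :
    (∀ i j, 0 ≤ v (M.adjugate i j)) ∧ 0 ≤ v M.det := by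
  set O := vRing v hv0 hvmul hvadd
  set M' : Matrix (Fin n) (Fin n) O := Matrix.of fun i j => (⟨M i j, hM i j⟩ : O) with hM'
  have hmap : O.subtype.mapMatrix M' = M := by ext i j; rfl
  constructor
  · intro i j
    have h1 : M.adjugate i j = O.subtype (M'.adjugate i j) := by
      conv_lhs => rw [← hmap]
      rw [← RingHom.map_adjugate]
      rfl
    rw [h1]
    exact (M'.adjugate i j).2
  · have h1 : M.det = O.subtype M'.det := by
      conv_lhs => rw [← hmap]
      rw [← RingHom.map_det]
    rw [h1]
    exact M'.det.2

end Helpers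

section KeyB

variable {K : Type*} [Field K] (v : K → WithTop ℤ)


lemma T_bound_aux (hv0 : ∀ x : K, v x = ⊤ ↔ x = 0)
    (hvmul : ∀ x y : K, v (x * y) = v x + v y)
    (hvadd : ∀ x y : K, min (v x) (v y) ≤ v (x + y))
    (x y x' y' : K) (d i j : ℕ) (hij : j < i) (hid : i ≤ d) :
    v (x * y' - x' * y) + (d - 1) • (min (v x) (v y) + min (v x') (v y')) ≤
      v (x ^ i * y ^ (d - i) * x' ^ j * y' ^ (d - j)
        - x ^ j * y ^ (d - j) * x' ^ i * y' ^ (d - i)) := by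
  set mP := min (v x) (v y) with hmP
  set mQ := min (v x') (v y') with hmQ
  set S := mP + mQ with hS
  obtain ⟨n, hn1, rfl⟩ : ∃ n, 1 ≤ n ∧ i = j + n := ⟨i - j, by omega, by omega⟩
  set e := d - (j + n) with he
  have hdj : d - j = e + n := by omega
  rw [hdj]
  have hfact : x ^ (j + n) * y ^ e * x' ^ j * y' ^ (e + n)
      - x ^ j * y ^ (e + n) * x' ^ (j + n) * y' ^ e
      = ((x ^ j * x' ^ j) * (y ^ e * y' ^ e)) *
        ((∑ t ∈ Finset.range n, (x * y') ^ t * (x' * y) ^ (n - 1 - t)) * (x * y' - x' * y)) := by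
    rw [geom_sum₂_mul]
    simp only [pow_add, mul_pow]
    ring
  rw [hfact, hvmul]
  have hmon : (j + e) • S ≤ v ((x ^ j * x' ^ j) * (y ^ e * y' ^ e)) := by
    have h1 : j • S ≤ v (x ^ j * x' ^ j) := by
      rw [hS, smul_add]
      exact v_mul_le' v hvmul (v_pow_le' v hv0 hvmul (min_le_left _ _) j)
        (v_pow_le' v hv0 hvmul (min_le_left _ _) j)
    have h2 : e • S ≤ v (y ^ e * y' ^ e) := by
      rw [hS, smul_add]
      exact v_mul_le' v hvmul (v_pow_le' v hv0 hvmul (min_le_right _ _) e)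
        (v_pow_le' v hv0 hvmul (min_le_right _ _) e)
    rw [add_nsmul]
    exact v_mul_le' v hvmul h1 h2
  have hgeom : (n - 1) • S ≤
      v (∑ t ∈ Finset.range n, (x * y') ^ t * (x' * y) ^ (n - 1 - t)) := by
    refine v_sum_le' v hv0 hvadd _ _ _ (fun t ht => ?_)
    have htn : t ≤ n - 1 := by
      have := Finset.mem_range.mp ht; omega
    have hS1 : S ≤ v (x * y') := by
      rw [hS, hvmul]
      exact add_le_add (min_le_left _ _) (min_le_right _ _)
    have hS2 : S ≤ v (x' * y) := by
      rw [hS, hvmul]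
      exact le_trans (le_of_eq (add_comm mP mQ))
        (add_le_add (min_le_left _ _) (min_le_right _ _))
    have : (n - 1) • S = t • S + (n - 1 - t) • S := by
      rw [← add_nsmul]
      congr 1
      omega
    rw [this]
    exact v_mul_le' v hvmul (v_pow_le' v hv0 hvmul hS1 t) (v_pow_le' v hv0 hvmul hS2 _)
  have hd1 : d - 1 = (j + e) + (n - 1) := by omega
  rw [hd1, add_nsmul]
  calc v (x * y' - x' * y) + ((j + e) • S + (n - 1) • S)
      = (j + e) • S + ((n - 1) • S + v (x * y' - x' * y)) := by
        rw [add_comm (v (x * y' - x' * y)) _, add_assoc]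
    _ ≤ v (x ^ j * x' ^ j * (y ^ e * y' ^ e)) +
        v ((∑ t ∈ Finset.range n, (x * y') ^ t * (x' * y) ^ (n - 1 - t)) * (x * y' - x' * y)) := by
        refine add_le_add hmon ?_
        rw [hvmul]
        exact add_le_add hgeom le_rfl

lemma keyB (hv0 : ∀ x : K, v x = ⊤ ↔ x = 0)
    (hvmul : ∀ x y : K, v (x * y) = v x + v y)
    (hvadd : ∀ x y : K, min (v x) (v y) ≤ v (x + y))
    (d : ℕ) (a b : Fin (d + 1) → K)
    (ha : ∀ i, 0 ≤ v (a i)) (hb : ∀ i, 0 ≤ v (b i)) (x y x' y' : K) :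
    v (x * y' - x' * y) + (d - 1) • (min (v x) (v y) + min (v x') (v y')) ≤
      v (homEval d a x y * homEval d b x' y' - homEval d a x' y' * homEval d b x y) := by
  set c := v (x * y' - x' * y) + (d - 1) • (min (v x) (v y) + min (v x') (v y')) with hc
  rw [homEval, homEval, homEval, homEval, Finset.sum_mul_sum, Finset.sum_mul_sum,
    ← Finset.sum_sub_distrib]
  simp only [← Finset.sum_sub_distrib]
  refine v_sum_le' v hv0 hvadd _ _ _ (fun i _ => ?_)
  refine v_sum_le' v hv0 hvadd _ _ _ (fun j _ => ?_)
  have hrw : a i * x ^ (i : ℕ) * y ^ (d - (i : ℕ)) * (b j * x' ^ (j : ℕ) * y' ^ (d - (j : ℕ)))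
      - a i * x' ^ (i : ℕ) * y' ^ (d - (i : ℕ)) * (b j * x ^ (j : ℕ) * y ^ (d - (j : ℕ)))
      = (a i * b j) *
        (x ^ (i : ℕ) * y ^ (d - (i : ℕ)) * x' ^ (j : ℕ) * y' ^ (d - (j : ℕ))
          - x ^ (j : ℕ) * y ^ (d - (j : ℕ)) * x' ^ (i : ℕ) * y' ^ (d - (i : ℕ))) := by
    ring
  rw [hrw, hvmul]
  have hab : (0 : WithTop ℤ) ≤ v (a i * b j) := by
    rw [hvmul]
    simpa using add_le_add (ha i) (hb j)
  have hT : c ≤ v (x ^ (i : ℕ) * y ^ (d - (i : ℕ)) * x' ^ (j : ℕ) * y' ^ (d - (j : ℕ))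
      - x ^ (j : ℕ) * y ^ (d - (j : ℕ)) * x' ^ (i : ℕ) * y' ^ (d - (i : ℕ))) := by
    rcases lt_trichotomy (i : ℕ) (j : ℕ) with hlt | heq | hgt
    · have hneg : x ^ (i : ℕ) * y ^ (d - (i : ℕ)) * x' ^ (j : ℕ) * y' ^ (d - (j : ℕ))
          - x ^ (j : ℕ) * y ^ (d - (j : ℕ)) * x' ^ (i : ℕ) * y' ^ (d - (i : ℕ))
          = -(x ^ (j : ℕ) * y ^ (d - (j : ℕ)) * x' ^ (i : ℕ) * y' ^ (d - (i : ℕ))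
            - x ^ (i : ℕ) * y ^ (d - (i : ℕ)) * x' ^ (j : ℕ) * y' ^ (d - (j : ℕ))) := by ring
      rw [hneg, v_neg' v hv0 hvmul]
      exact T_bound_aux v hv0 hvmul hvadd x y x' y' d (j : ℕ) (i : ℕ) hlt j.is_le
    · rw [heq, sub_self, v_zero' v hv0]
      exact le_top
    · exact T_bound_aux v hv0 hvmul hvadd x y x' y' d (i : ℕ) (j : ℕ) hgt i.is_le
  calc c = 0 + c := (zero_add c).symm
    _ ≤ v (a i * b j) + _ := add_le_add hab hT

end KeyB

section Resultant

variable {K : Type*} [Field K] (v : K → WithTop ℤ)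

lemma homEval_lower (hv0 : ∀ x : K, v x = ⊤ ↔ x = 0)
    (hvmul : ∀ x y : K, v (x * y) = v x + v y)
    (hvadd : ∀ x y : K, min (v x) (v y) ≤ v (x + y))
    (d : ℕ) (a : Fin (d + 1) → K) (ha : ∀ i, 0 ≤ v (a i)) (x y : K) :
    d • min (v x) (v y) ≤ v (homEval d a x y) := by
  refine v_sum_le' v hv0 hvadd _ _ _ (fun i _ => ?_)
  have hsplit : d • min (v x) (v y) =
      (0 + (i : ℕ) • min (v x) (v y)) + (d - (i : ℕ)) • min (v x) (v y) := by
    rw [zero_add, ← add_nsmul]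
    congr 1
    have := i.is_le; omega
  rw [hsplit]
  exact v_mul_le' v hvmul
    (v_mul_le' v hvmul (ha i) (v_pow_le' v hv0 hvmul (min_le_left _ _) _))
    (v_pow_le' v hv0 hvmul (min_le_right _ _) _)

lemma sylvester_mulVec (d : ℕ) (a b : Fin (d + 1) → K) (x y : K) (i : Fin (d + d)) :
    (sylvester d a b).mulVec (fun j : Fin (d + d) => x ^ (j : ℕ) * y ^ (d + d - 1 - (j : ℕ))) i =
      if (i : ℕ) < d then x ^ (i : ℕ) * y ^ (d - 1 - (i : ℕ)) * homEval d a x y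
      else x ^ ((i : ℕ) - d) * y ^ (d + d - 1 - (i : ℕ)) * homEval d b x y := by
  have hi2 : (i : ℕ) < d + d := i.2
  simp only [Matrix.mulVec, dotProduct]
  by_cases hi : (i : ℕ) < d
  · rw [if_pos hi]
    have hrhs : x ^ (i : ℕ) * y ^ (d - 1 - (i : ℕ)) * homEval d a x y =
        ∑ k : Fin (d + 1), a k * (x ^ ((i : ℕ) + (k : ℕ)) * y ^ (d + d - 1 - ((i : ℕ) + (k : ℕ)))) := by
      rw [homEval, Finset.mul_sum]
      refine Finset.sum_congr rfl fun k _ => ?_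
      have hk := k.is_le
      have hexp : d + d - 1 - ((i : ℕ) + (k : ℕ)) = (d - 1 - (i : ℕ)) + (d - (k : ℕ)) := by omega
      rw [hexp, pow_add, pow_add]; ring
    rw [hrhs]
    refine (Finset.sum_of_injOn
      (fun k : Fin (d + 1) => (⟨(i : ℕ) + (k : ℕ), by have := k.is_le; omega⟩ : Fin (d + d)))
      ?_ ?_ ?_ ?_).symm
    · intro k1 _ k2 _ h
      have := congrArg Fin.val h
      simp only at this
      exact Fin.ext (by omega)
    · intro k _; simp
    · intro j _ hj
      have hz : sylvester d a b i j = 0 := by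
        simp only [sylvester, Matrix.of_apply, if_pos hi]
        rw [dif_neg]
        intro ⟨h1, h2⟩
        refine hj ⟨⟨(j : ℕ) - (i : ℕ), by omega⟩, by simp, ?_⟩
        exact Fin.ext (show (i : ℕ) + ((j : ℕ) - (i : ℕ)) = (j : ℕ) by omega)
      rw [hz, zero_mul]
    · intro k _
      have hk := k.is_le
      simp only [sylvester, Matrix.of_apply, if_pos hi]
      rw [dif_pos ⟨by omega, by omega⟩]
      have : a ⟨(i : ℕ) + (k : ℕ) - (i : ℕ), by omega⟩ = a k := by
        congr 1
        exact Fin.ext (show (i : ℕ) + (k : ℕ) - (i : ℕ) = (k : ℕ) by omega)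
      rw [this]
  · rw [if_neg hi]
    push_neg at hi
    have hrhs : x ^ ((i : ℕ) - d) * y ^ (d + d - 1 - (i : ℕ)) * homEval d b x y =
        ∑ k : Fin (d + 1), b k *
          (x ^ ((i : ℕ) - d + (k : ℕ)) * y ^ (d + d - 1 - ((i : ℕ) - d + (k : ℕ)))) := by
      rw [homEval, Finset.mul_sum]
      refine Finset.sum_congr rfl fun k _ => ?_
      have hk := k.is_le
      have hexp : d + d - 1 - ((i : ℕ) - d + (k : ℕ)) =
          (d + d - 1 - (i : ℕ)) + (d - (k : ℕ)) := by omega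
      rw [hexp, pow_add, pow_add]; ring
    rw [hrhs]
    refine (Finset.sum_of_injOn
      (fun k : Fin (d + 1) => (⟨(i : ℕ) - d + (k : ℕ), by have := k.is_le; omega⟩ : Fin (d + d)))
      ?_ ?_ ?_ ?_).symm
    · intro k1 _ k2 _ h
      have := congrArg Fin.val h
      simp only at this
      exact Fin.ext (by omega)
    · intro k _; simp
    · intro j _ hj
      have hz : sylvester d a b i j = 0 := by
        simp only [sylvester, Matrix.of_apply, if_neg (by omega : ¬ (i : ℕ) < d)]
        rw [dif_neg]
        intro ⟨h1, h2⟩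
        refine hj ⟨⟨(j : ℕ) - ((i : ℕ) - d), by omega⟩, by simp, ?_⟩
        exact Fin.ext (show (i : ℕ) - d + ((j : ℕ) - ((i : ℕ) - d)) = (j : ℕ) by omega)
      rw [hz, zero_mul]
    · intro k _
      have hk := k.is_le
      simp only [sylvester, Matrix.of_apply, if_neg (by omega : ¬ (i : ℕ) < d)]
      rw [dif_pos ⟨by omega, by omega⟩]
      have : b ⟨(i : ℕ) - d + (k : ℕ) - ((i : ℕ) - d), by omega⟩ = b k := by
        congr 1
        exact Fin.ext (show (i : ℕ) - d + (k : ℕ) - ((i : ℕ) - d) = (k : ℕ) by omega)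
      rw [this]

end Resultant

section Final

variable {K : Type*} [Field K] (v : K → WithTop ℤ)

lemma coe_nsmul' (n : ℕ) (z : ℤ) : n • (z : WithTop ℤ) = ((n • z : ℤ) : WithTop ℤ) := by
  push_cast; ring

lemma res_bound (hv0 : ∀ x : K, v x = ⊤ ↔ x = 0)
    (hvmul : ∀ x y : K, v (x * y) = v x + v y)
    (hvadd : ∀ x y : K, min (v x) (v y) ≤ v (x + y))
    (d : ℕ) (hd : 1 ≤ d) (a b : Fin (d + 1) → K)
    (ha : ∀ i, 0 ≤ v (a i)) (hb : ∀ i, 0 ≤ v (b i))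
    (hres : v ((sylvester d a b).det) = 0) (x y : K) (hxy : ¬(x = 0 ∧ y = 0)) :
    min (v (homEval d a x y)) (v (homEval d b x y)) ≤ d • min (v x) (v y) := by
  classical
  set m := min (v x) (v y) with hm
  set mF := min (v (homEval d a x y)) (v (homEval d b x y)) with hmF
  obtain ⟨mz, hmz⟩ : ∃ z : ℤ, m = (z : WithTop ℤ) := by
    have hne : m ≠ ⊤ := by
      rw [hm, Ne, min_eq_top, hv0, hv0]
      tauto
    obtain ⟨z, hz⟩ := WithTop.ne_top_iff_exists.mp hne
    exact ⟨z, hz.symm⟩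
  set R := sylvester d a b with hR
  have hRent : ∀ i j, 0 ≤ v (R i j) := by
    intro i j
    simp only [hR, sylvester, Matrix.of_apply]
    split_ifs with h1 h2 h3
    · exact ha _
    · rw [v_zero' v hv0]; exact le_top
    · exact hb _
    · rw [v_zero' v hv0]; exact le_top
  have hadj := (v_adj_det_nonneg' v hv0 hvmul hvadd R hRent).1
  set u : Fin (d + d) → K := fun j => x ^ (j : ℕ) * y ^ (d + d - 1 - (j : ℕ)) with hu
  set w : Fin (d + d) → K := fun i =>
    if (i : ℕ) < d then x ^ (i : ℕ) * y ^ (d - 1 - (i : ℕ)) * homEval d a x y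
    else x ^ ((i : ℕ) - d) * y ^ (d + d - 1 - (i : ℕ)) * homEval d b x y with hw
  have hMu : R.mulVec u = w := funext fun i => sylvester_mulVec d a b x y i
  have hdet : R.adjugate.mulVec w = R.det • u := by
    rw [← hMu, Matrix.mulVec_mulVec, Matrix.adjugate_mul, Matrix.smul_mulVec,
      Matrix.one_mulVec]
  have hwlow : ∀ k : Fin (d + d), (d - 1) • m + mF ≤ v (w k) := by
    intro k
    have hk2 : (k : ℕ) < d + d := k.2
    simp only [hw]
    by_cases hk : (k : ℕ) < d
    · rw [if_pos hk]
      have hsplit : (d - 1) • m + mF = ((k : ℕ) • m + (d - 1 - (k : ℕ)) • m) + mF := by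
        congr 1
        rw [← add_nsmul]
        congr 1
        omega
      rw [hsplit]
      exact v_mul_le' v hvmul
        (v_mul_le' v hvmul (v_pow_le' v hv0 hvmul (min_le_left _ _) _)
          (v_pow_le' v hv0 hvmul (min_le_right _ _) _))
        (min_le_left _ _)
    · rw [if_neg hk]
      have hsplit : (d - 1) • m + mF = (((k : ℕ) - d) • m + (d + d - 1 - (k : ℕ)) • m) + mF := by
        congr 1
        rw [← add_nsmul]
        congr 1
        omega
      rw [hsplit]
      exact v_mul_le' v hvmul
        (v_mul_le' v hvmul (v_pow_le' v hv0 hvmul (min_le_left _ _) _)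
          (v_pow_le' v hv0 hvmul (min_le_right _ _) _))
        (min_le_right _ _)
  have hkey : ∀ k : Fin (d + d), (d - 1) • m + mF ≤ v (u k) := by
    intro k
    have h1 : (d - 1) • m + mF ≤ v (R.adjugate.mulVec w k) := by
      simp only [Matrix.mulVec, dotProduct]
      refine v_sum_le' v hv0 hvadd _ _ _ (fun i _ => ?_)
      calc (d - 1) • m + mF = 0 + ((d - 1) • m + mF) := (zero_add _).symm
        _ ≤ v (R.adjugate k i) + v (w i) := add_le_add (hadj k i) (hwlow i)
        _ = v (R.adjugate k i * w i) := (hvmul _ _).symm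
    rw [hdet] at h1
    have h2 : (R.det • u) k = R.det * u k := rfl
    rw [h2, hvmul, hres, zero_add] at h1
    exact h1
  have hlast : v (u ⟨d + d - 1, by omega⟩) = (d + d - 1) • v x := by
    simp only [hu]
    rw [hvmul, v_pow' v hv0 hvmul, v_pow' v hv0 hvmul, Nat.sub_self, zero_nsmul, add_zero]
  have hfirst : v (u ⟨0, by omega⟩) = (d + d - 1) • v y := by
    simp only [hu]
    rw [hvmul, v_pow' v hv0 hvmul, v_pow' v hv0 hvmul, zero_nsmul, zero_add, Nat.sub_zero]
  have hx' := hkey ⟨d + d - 1, by omega⟩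
  rw [hlast] at hx'
  have hy' := hkey ⟨0, by omega⟩
  rw [hfirst] at hy'
  have hmin : (d - 1) • m + mF ≤ (d + d - 1) • m := by
    rcases min_cases (v x) (v y) with ⟨h, _⟩ | ⟨h, _⟩
    · have heq : (d + d - 1) • m = (d + d - 1) • v x := by rw [hm, h]
      rw [heq]; exact hx'
    · have heq : (d + d - 1) • m = (d + d - 1) • v y := by rw [hm, h]
      rw [heq]; exact hy'
  rw [hmz] at hmin ⊢
  cases hmF2 : mF with
  | top =>
    exfalso
    rw [hmF2, add_top, coe_nsmul'] at hmin
    exact (WithTop.not_top_le_coe _) hmin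
  | coe t =>
    rw [hmF2, coe_nsmul', coe_nsmul', ← WithTop.coe_add, WithTop.coe_le_coe] at hmin
    rw [coe_nsmul', WithTop.coe_le_coe]
    simp only [nsmul_eq_mul] at hmin ⊢
    have h1 : ((d - 1 : ℕ) : ℤ) = (d : ℤ) - 1 := by omega
    have h2 : ((d + d - 1 : ℕ) : ℤ) = (d : ℤ) + d - 1 := by omega
    rw [h1, h2] at hmin
    nlinarith [hmin]

end Final

/-- A rational map `Φ = [F : G]` of degree `d ≥ 1`, with coefficients in the valuation ring
`O_v` and resultant `Res(F,G)` a `v`-unit (i.e. with good reduction at `v`), is non-expanding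
for the `v`-adic logarithmic distance: `δ_v(Φ(P), Φ(Q)) ≥ δ_v(P, Q)`. -/
theorem good_reduction_nonexpanding {K : Type*} [Field K] (v : K → WithTop ℤ)
    (hv0 : ∀ x : K, v x = ⊤ ↔ x = 0)
    (hvmul : ∀ x y : K, v (x * y) = v x + v y)
    (hvadd : ∀ x y : K, min (v x) (v y) ≤ v (x + y))
    (hvsurj : ∀ n : ℤ, ∃ x : K, v x = (n : WithTop ℤ))
    (d : ℕ) (hd : 1 ≤ d) (a b : Fin (d + 1) → K)
    (ha : ∀ i, 0 ≤ v (a i)) (hb : ∀ i, 0 ≤ v (b i))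
    (hres : v ((sylvester d a b).det) = 0)
    (P Q : K × K) (hP : P ≠ 0) (hQ : Q ≠ 0) :
    logDist v P Q ≤
      logDist v (homEval d a P.1 P.2, homEval d b P.1 P.2)
        (homEval d a Q.1 Q.2, homEval d b Q.1 Q.2) := by
  obtain ⟨x, y⟩ := P
  obtain ⟨x', y'⟩ := Q
  have hxy : ¬(x = 0 ∧ y = 0) := by
    intro ⟨h1, h2⟩
    exact hP (by simp [Prod.ext_iff, h1, h2])
  have hxy' : ¬(x' = 0 ∧ y' = 0) := by
    intro ⟨h1, h2⟩
    exact hQ (by simp [Prod.ext_iff, h1, h2])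
  simp only [logDist]
  obtain ⟨mp, hmp⟩ : ∃ z : ℤ, min (v x) (v y) = (z : WithTop ℤ) := by
    have hne : min (v x) (v y) ≠ ⊤ := by rw [Ne, min_eq_top, hv0, hv0]; tauto
    obtain ⟨z, hz⟩ := WithTop.ne_top_iff_exists.mp hne
    exact ⟨z, hz.symm⟩
  obtain ⟨mq, hmq⟩ : ∃ z : ℤ, min (v x') (v y') = (z : WithTop ℤ) := by
    have hne : min (v x') (v y') ≠ ⊤ := by rw [Ne, min_eq_top, hv0, hv0]; tauto
    obtain ⟨z, hz⟩ := WithTop.ne_top_iff_exists.mp hne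
    exact ⟨z, hz.symm⟩
  have hmFP : min (v (homEval d a x y)) (v (homEval d b x y)) = d • min (v x) (v y) :=
    le_antisymm (res_bound v hv0 hvmul hvadd d hd a b ha hb hres x y hxy)
      (le_min (homEval_lower v hv0 hvmul hvadd d a ha x y)
        (homEval_lower v hv0 hvmul hvadd d b hb x y))
  have hmFQ : min (v (homEval d a x' y')) (v (homEval d b x' y')) = d • min (v x') (v y') :=
    le_antisymm (res_bound v hv0 hvmul hvadd d hd a b ha hb hres x' y' hxy')
      (le_min (homEval_lower v hv0 hvmul hvadd d a ha x' y')
        (homEval_lower v hv0 hvmul hvadd d b hb x' y'))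
  have hkey := keyB v hv0 hvmul hvadd d a b ha hb x y x' y'
  rw [hmp, hmq, ← WithTop.coe_add, coe_nsmul'] at hkey
  rw [hmFP, hmFQ, hmp, hmq, coe_nsmul', coe_nsmul']
  cases hDF : v (homEval d a x y * homEval d b x' y' - homEval d a x' y' * homEval d b x y) with
  | top =>
    have htop : (⊤ : WithTop ℤ) - ((d • mp : ℤ) : WithTop ℤ) - ((d • mq : ℤ) : WithTop ℤ)
        = ⊤ := rfl
    rw [htop]
    exact le_top
  | coe zF =>
    rw [hDF] at hkey
    cases hD : v (x * y' - x' * y) with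
    | top =>
      rw [hD, top_add] at hkey
      exact absurd hkey (WithTop.not_top_le_coe _)
    | coe zD =>
      rw [hD] at hkey
      have hcoe : ∀ z w : ℤ, (z : WithTop ℤ) - (w : WithTop ℤ) = ((z - w : ℤ) : WithTop ℤ) :=
        fun _ _ => rfl
      rw [hcoe, hcoe, hcoe, hcoe, WithTop.coe_le_coe]
      rw [← WithTop.coe_add, WithTop.coe_le_coe] at hkey
      simp only [nsmul_eq_mul] at hkey ⊢
      have h1 : (((d - 1 : ℕ)) : ℤ) = (d : ℤ) - 1 := by omega
      rw [h1] at hkey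
      nlinarith [hkey]
end

section
/- Let v be a discrete valuation on a field K, Φ a self-map of ℙ¹(K) with δ_v(Φ(P),Φ(Q)) ≥ δ_v(P,Q) and satisfying the ultrametric triangle inequality for δ_v, and let Q₀ = [0:1] be a fixed point of Φ. Let (Q_{-m},…,Q₀) be an orbit segment with Q_i = [x_i:y_i], min(v(x_i),v(y_i)) = 0. Then for all -m ≤ j < i ≤ 0, v(x_j y_i - x_i y_j) ≥ v(x_j); equivalently, x_j 'divides' x_j y_i - x_i y_j at v. -/
theorem dist_fixedPoint_le_of_orbit {α β : Type*} [Preorder β] {d : α → α → β} {Φ : α → α}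
    (hexp : ∀ P Q, d P Q ≤ d (Φ P) (Φ Q)) {Q : α} (hfix : Φ Q = Q) {m : ℕ} {P : ℕ → α}
    (horb : ∀ i < m, P (i + 1) = Φ (P i)) {i j : ℕ} (hji : j ≤ i) (him : i ≤ m) :
    d (P j) Q ≤ d (P i) Q := by
  induction i, hji using Nat.le_induction with
  | base => exact le_rfl
  | succ i hji ih =>
    calc d (P j) Q ≤ d (P i) Q := ih (by omega)
      _ ≤ d (Φ (P i)) (Φ Q) := hexp _ _
      _ = d (P (i + 1)) Q := by rw [hfix, horb i (by omega)]

section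

variable {K : Type*} [Field K] (v : AddValuation K (WithTop ℤ))

theorem logDist_zero_one_right {P : K × K} (hP : min (v P.1) (v P.2) = 0) :
    logDist v P (0, 1) = v P.1 := by
  simp [logDist, hP]

theorem AddValuation.le_map_mul_sub_mul {x₁ y₁ x₂ y₂ : K} (hx : v x₁ ≤ v x₂) (hy₁ : 0 ≤ v y₁)
    (hy₂ : 0 ≤ v y₂) : v x₁ ≤ v (x₁ * y₂ - x₂ * y₁) := by
  refine le_trans (le_min ?_ ?_) (v.map_sub _ _) <;> rw [v.map_mul]
  · exact le_add_of_nonneg_right hy₂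
  · exact le_add_of_le_of_nonneg hx hy₁

end

theorem orbit_cross_dvd_general {K : Type*} [Field K] (v : K → WithTop ℤ)
    (hv0 : ∀ x : K, v x = ⊤ ↔ x = 0)
    (hvmul : ∀ x y : K, v (x * y) = v x + v y)
    (hvadd : ∀ x y : K, min (v x) (v y) ≤ v (x + y))
    (Φ : K × K → K × K)
    (hexp : ∀ P Q : K × K, logDist v P Q ≤ logDist v (Φ P) (Φ Q))
    (m : ℕ) (P : ℕ → K × K)
    (horb : ∀ i : ℕ, i < m → P (i + 1) = Φ (P i))
    (hfix : Φ (P m) = P m) (hQ0 : P m = (0, 1))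
    (hcop : ∀ i : ℕ, i ≤ m → min (v (P i).1) (v (P i).2) = 0) :
    ∀ i j : ℕ, j < i → i ≤ m → v (P j).1 ≤ v ((P j).1 * (P i).2 - (P i).1 * (P j).2) := by
  intro i j hji him
  have hv1 : v 1 = 0 := by
    obtain ⟨n, hn⟩ := WithTop.ne_top_iff_exists.mp (mt (hv0 1).mp one_ne_zero)
    have h : (n : WithTop ℤ) = n + n := by rw [hn, ← hvmul, one_mul]
    have hn0 : n = 0 := by norm_cast at h; omega
    rw [← hn, hn0]
    rfl
  let w : AddValuation K (WithTop ℤ) := .of v ((hv0 0).mpr rfl) hv1 hvadd hvmul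
  have hdist : ∀ k ≤ m, logDist v (P k) (P m) = v (P k).1 := fun k hk ↦ by
    rw [hQ0]; exact logDist_zero_one_right w (hcop k hk)
  have hx : v (P j).1 ≤ v (P i).1 := by
    simpa only [hdist j (by omega), hdist i him] using
      dist_fixedPoint_le_of_orbit hexp hfix horb hji.le him
  have hy : ∀ k ≤ m, 0 ≤ v (P k).2 := fun k hk ↦ hcop k hk ▸ min_le_right _ _
  exact w.le_map_mul_sub_mul hx (hy j (by omega)) (hy i him)

/-- Along an orbit segment `Q_0, …, Q_m` (with `Q_m = [0:1]` a fixed point of the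
non-expanding map `Φ`) in `v`-coprime coordinates, for `j < i ≤ m` one has
`v(x_j y_i - x_i y_j) ≥ v(x_j)`, i.e. `x_j` divides `x_j y_i - x_i y_j` at `v`. -/
theorem orbit_cross_dvd {K : Type*} [Field K] (v : K → WithTop ℤ)
    (hv0 : ∀ x : K, v x = ⊤ ↔ x = 0)
    (hvmul : ∀ x y : K, v (x * y) = v x + v y)
    (hvadd : ∀ x y : K, min (v x) (v y) ≤ v (x + y))
    (hvsurj : ∀ n : ℤ, ∃ x : K, v x = (n : WithTop ℤ))
    (Φ : K × K → K × K)
    (hexp : ∀ P Q : K × K, logDist v P Q ≤ logDist v (Φ P) (Φ Q))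
    (m : ℕ) (P : ℕ → K × K)
    (horb : ∀ i : ℕ, i < m → P (i + 1) = Φ (P i))
    (hfix : Φ (P m) = P m) (hQ0 : P m = (0, 1))
    (hcop : ∀ i : ℕ, i ≤ m → min (v (P i).1) (v (P i).2) = 0) :
    ∀ i j : ℕ, j < i → i ≤ m → v (P j).1 ≤ v ((P j).1 * (P i).2 - (P i).1 * (P j).2) :=
  orbit_cross_dvd_general v hv0 hvmul hvadd Φ hexp m P horb hfix hQ0 hcop
end

section
/- If a point P ∈ ℙ¹(K) is periodic with minimal period n ≥ 3 for an automorphism Ψ ∈ PGL₂(K), then Ψⁿ is the identity map of ℙ¹(K). -/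
open Projectivization

private lemma projEq_of_smul {K V : Type*} [Field K] [AddCommGroup V] [Module K V]
    (X Y : Projectivization K V) (s : K) (h : s • Y.rep = X.rep) : X = Y := by
  rw [← mk_rep X, ← mk_rep Y]
  exact (mk_eq_mk_iff' ..).2 ⟨s, h⟩

/-- If a point `P ∈ ℙ¹(K)` is periodic of minimal period `n ≥ 3` for an automorphism of
`ℙ¹(K)` (induced by a linear automorphism of `K²`, i.e. an element of `PGL₂(K)`), then the
`n`-th iterate of the automorphism is the identity map of `ℙ¹(K)`. -/
theorem periodic_period_ge_three_implies_identity {K : Type*} [Field K]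
    (e : (Fin 2 → K) ≃ₗ[K] (Fin 2 → K))
    (Ψ : Projectivization K (Fin 2 → K) → Projectivization K (Fin 2 → K))
    (hΨ : Ψ = Projectivization.map (e : (Fin 2 → K) →ₗ[K] (Fin 2 → K)) e.injective)
    (P : Projectivization K (Fin 2 → K)) (n : ℕ) (hn : 3 ≤ n)
    (hper : Ψ^[n] P = P)
    (hmin : ∀ k : ℕ, 0 < k → Ψ^[k] P = P → n ≤ k) :
    ∀ Q : Projectivization K (Fin 2 → K), Ψ^[n] Q = Q := by
  have hiter : ∀ (k : ℕ) (v : Fin 2 → K) (hv : v ≠ 0),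
      Ψ^[k] (mk K v hv) = mk K ((e ^ k) v) (((e ^ k).injective.ne_iff' (map_zero _)).2 hv) := by
    intro k
    induction k with
    | zero => intro v hv; simp
    | succ k ih =>
      intro v hv
      rw [Function.iterate_succ_apply, hΨ, Projectivization.map_mk, ← hΨ, ih]
      apply (mk_eq_mk_iff' ..).2
      refine ⟨1, ?_⟩
      simp only [LinearEquiv.pow_apply, Function.iterate_succ_apply', one_smul]
      exact (Function.Commute.iterate_self (⇑e) k v).symm
  have hΨinj : Function.Injective Ψ := by
    rw [hΨ]; exact Projectivization.map_injective _ _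
  have h1 : Ψ P ≠ P := fun h => by
    have := hmin 1 one_pos (by simpa using h); omega
  have h2 : Ψ^[2] P ≠ P := fun h => by
    have := hmin 2 two_pos h; omega
  have h12 : Ψ^[2] P ≠ Ψ P := fun h => h1 (hΨinj h)
  have hfix1 : Ψ^[n] (Ψ P) = Ψ P := by
    rw [← Function.iterate_succ_apply, Function.iterate_succ_apply', hper]
  have hfix2 : Ψ^[n] (Ψ^[2] P) = Ψ^[2] P := by
    have : Ψ^[n] (Ψ^[2] P) = Ψ^[2] (Ψ^[n] P) := by
      rw [← Function.iterate_add_apply, ← Function.iterate_add_apply, Nat.add_comm]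
    rw [this, hper]
  have key : ∀ (X : Projectivization K (Fin 2 → K)), Ψ^[n] X = X →
      ∃ a : K, (e ^ n) X.rep = a • X.rep := by
    intro X h
    rw [← mk_rep X, hiter n X.rep (rep_nonzero X)] at h
    obtain ⟨a, ha⟩ := (mk_eq_mk_iff' ..).1 h
    exact ⟨a, ha.symm⟩
  obtain ⟨a, hA⟩ := key P hper
  obtain ⟨b, hB⟩ := key (Ψ P) hfix1
  obtain ⟨c, hC⟩ := key (Ψ^[2] P) hfix2
  set v := P.rep with hv
  set w := (Ψ P).rep with hw
  set u := (Ψ^[2] P).rep with hu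
  have hv0 : v ≠ 0 := rep_nonzero P
  have hw0 : w ≠ 0 := rep_nonzero (Ψ P)
  have hu0 : u ≠ 0 := rep_nonzero (Ψ^[2] P)
  have hind : LinearIndependent K ![v, w] := by
    rw [LinearIndependent.pair_iff' hv0]
    intro s hs
    exact h1 (projEq_of_smul (Ψ P) P s hs)
  have hrange : Set.range ![v, w] = {v, w} := by
    ext x
    constructor
    · rintro ⟨i, rfl⟩; fin_cases i <;> simp
    · rintro (rfl | rfl)
      exacts [⟨0, rfl⟩, ⟨1, rfl⟩]
  have hspan : Submodule.span K {v, w} = ⊤ := by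
    have := hind.span_eq_top_of_card_eq_finrank
      (by rw [Fintype.card_fin, Module.finrank_fin_fun])
    rwa [hrange] at this
  have hmem : ∀ z : Fin 2 → K, ∃ α β : K, α • v + β • w = z := by
    intro z
    exact Submodule.mem_span_pair.1 (hspan ▸ Submodule.mem_top)
  obtain ⟨α, β, huvw⟩ := hmem u
  have hindc := LinearIndependent.pair_iff.1 hind
  have hα : α ≠ 0 := by
    intro h0
    refine h12 (projEq_of_smul (Ψ^[2] P) (Ψ P) β ?_)
    rw [← hw, ← hu, ← huvw, h0]; simp
  have hβ : β ≠ 0 := by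
    intro h0
    refine h2 (projEq_of_smul (Ψ^[2] P) P α ?_)
    rw [← hv, ← hu, ← huvw, h0]; simp
  have heq1 : (e ^ n) u = (α * a) • v + (β * b) • w := by
    rw [← huvw]
    rw [map_add, map_smul, map_smul, hA, hB, smul_smul, smul_smul]
  have heq2 : (e ^ n) u = (c * α) • v + (c * β) • w := by
    rw [hC, ← huvw, smul_add, smul_smul, smul_smul]
  have hzero : (α * a - c * α) • v + (β * b - c * β) • w = 0 := by
    have hsplit : (α * a - c * α) • v + (β * b - c * β) • w
        = ((α * a) • v + (β * b) • w) - ((c * α) • v + (c * β) • w) := by module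
    rw [hsplit, ← heq1, ← heq2, sub_self]
  obtain ⟨hc1, hc2⟩ := hindc _ _ hzero
  have hac : a = c := by
    have : α * (a - c) = 0 := by linear_combination hc1
    rcases mul_eq_zero.1 this with h | h
    · exact absurd h hα
    · exact sub_eq_zero.1 h
  have hbc : b = c := by
    have : β * (b - c) = 0 := by linear_combination hc2
    rcases mul_eq_zero.1 this with h | h
    · exact absurd h hβ
    · exact sub_eq_zero.1 h
  intro Q
  obtain ⟨s, t, hst⟩ := hmem Q.rep
  have hQ : (e ^ n) Q.rep = a • Q.rep := by
    rw [← hst, map_add, map_smul, map_smul, hA, hB, hbc, ← hac, smul_add, smul_smul,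
      smul_smul, smul_smul, smul_smul, mul_comm s a, mul_comm t a]
  rw [← mk_rep Q, hiter n Q.rep (rep_nonzero Q)]
  exact (mk_eq_mk_iff' ..).2 ⟨a, hQ.symm⟩
end

section
/- Let K be a number field of degree d over ℚ. Then every element of finite order in PGL₂(K) has order at most 2 + 4d². -/
/-!
Lift `x` to `g ∈ GL₂(K)` and let `a, b` be the roots of its characteristic polynomial; they lie
in `F = K(a)`, of degree at most `2` over `K`. Since some power `gⁿ` is scalar, `g` is
semisimple: if `a = b`, then `g = a + N` with `N² = 0` and `gⁿ = aⁿ + n aⁿ⁻¹ N`. Hence `gᵐ` is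
scalar exactly when `aᵐ = bᵐ`, so the order of `x` is the order `m` of the root of unity `a / b`
of `F`. Then `φ(m) ≤ [F : ℚ] ≤ 2d`, and the elementary bound `m ≤ φ(m)² + 2` concludes.
-/

open Polynomial

namespace Nat

theorem two_mul_le_totient_sq_of_prime_pow {p k : ℕ} (hp : p.Prime) (hp2 : p ≠ 2) (hk : k ≠ 0)
    (h3 : p ^ k ≠ 3) : 2 * p ^ k ≤ φ (p ^ k) ^ 2 := by
  obtain ⟨j, rfl⟩ := exists_eq_succ_of_ne_zero hk
  obtain ⟨q, rfl⟩ : ∃ q, p = q + 3 := ⟨p - 3, by have := hp.two_le; omega⟩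
  rw [totient_prime_pow_succ hp, show q + 3 - 1 = q + 2 by omega]
  have key : 2 * (q + 3) ≤ (q + 3) ^ j * (q + 2) ^ 2 := by
    rcases q with _ | q
    · have : 3 ≤ 3 ^ j := le_self_pow (by rintro rfl; simp at h3) 3
      simp only [zero_add]
      nlinarith
    · calc 2 * (q + 1 + 3) ≤ 1 * (q + 1 + 2) ^ 2 := by nlinarith
        _ ≤ (q + 1 + 3) ^ j * (q + 1 + 2) ^ 2 := by gcongr; exact one_le_pow j _ (by omega)
  calc 2 * (q + 3) ^ (j + 1) = (q + 3) ^ j * (2 * (q + 3)) := by ring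
    _ ≤ (q + 3) ^ j * ((q + 3) ^ j * (q + 2) ^ 2) := by gcongr
    _ = ((q + 3) ^ j * (q + 2)) ^ 2 := by ring

theorem two_mul_le_totient_sq_of_odd {b : ℕ} (hb : Odd b) (h1 : b ≠ 1) (h3 : b ≠ 3) :
    2 * b ≤ φ b ^ 2 := by
  induction b using recOnPosPrimePosCoprime with
  | zero => simp at hb
  | one => simp at h1
  | prime_pow p k hp hk =>
    refine two_mul_le_totient_sq_of_prime_pow hp ?_ hk.ne' h3
    rintro rfl
    exact not_even_iff_odd.mpr hb (even_two.pow_of_ne_zero hk.ne')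
  | coprime a b ha1 hb1 hab iha ihb =>
    obtain ⟨hao, hbo⟩ := odd_mul.mp hb
    rw [totient_mul hab, mul_pow]
    by_cases ha3 : a = 3
    · subst ha3
      have hb3 : b ≠ 3 := by rintro rfl; simp at hab
      have := ihb hbo hb1.ne' hb3
      simp only [show φ 3 = 2 by decide]
      nlinarith
    by_cases hb3 : b = 3
    · subst hb3
      have := iha hao ha1.ne' ha3
      simp only [show φ 3 = 2 by decide]
      nlinarith
    have := iha hao ha1.ne' ha3
    have := ihb hbo hb1.ne' hb3
    nlinarith

theorem le_totient_sq_add_two (n : ℕ) : n ≤ φ n ^ 2 + 2 := by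
  rcases eq_or_ne n 0 with rfl | hn
  · simp
  obtain ⟨k, m, hm, rfl⟩ := exists_eq_two_pow_mul_odd hn
  rw [totient_mul ((coprime_two_left.mpr hm).pow_left k)]
  have hm' : m ≤ φ m ^ 2 ∧ 2 * m ≤ φ m ^ 2 + 2 := by
    by_cases h1 : m = 1
    · subst h1; decide
    by_cases h3 : m = 3
    · subst h3; decide
    have := two_mul_le_totient_sq_of_odd hm h1 h3
    omega
  rcases k with _ | _ | j
  · simp only [pow_zero, one_mul, totient_one]; omega
  · simpa using hm'.2
  · have h2 : 2 ^ (j + 2) ≤ (2 ^ (j + 1)) ^ 2 := by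
      rw [← pow_mul]
      exact Nat.pow_le_pow_right two_pos (by omega)
    rw [totient_prime_pow_succ prime_two, show 2 - 1 = 1 from rfl, mul_one, mul_pow]
    nlinarith [Nat.mul_le_mul h2 hm'.1]

end Nat

theorem IsPrimitiveRoot.totient_le_finrank {F : Type*} [Field F] [CharZero F]
    [FiniteDimensional ℚ F] {ζ : F} {n : ℕ} (h : IsPrimitiveRoot ζ n) (hn : 0 < n) :
    n.totient ≤ Module.finrank ℚ F := by
  rw [← natDegree_cyclotomic n ℚ, cyclotomic_eq_minpoly_rat h hn]
  exact minpoly.natDegree_le ζ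

open IntermediateField in
theorem IntermediateField.finrank_adjoin_simple_le_natDegree {K L : Type*} [Field K] [Field L]
    [Algebra K L] {p : K[X]} (hp : p.Monic) {r : L} (hr : aeval r p = 0) :
    Module.finrank K K⟮r⟯ ≤ p.natDegree := by
  rw [adjoin.finrank ⟨p, hp, hr⟩]
  exact natDegree_le_of_dvd (minpoly.dvd K r hr) hp.ne_zero

open IntermediateField in
theorem Polynomial.exists_map_adjoin_eq_X_sub_C_mul_X_sub_C {K L : Type*} [Field K] [Field L]
    [Algebra K L] {p : K[X]} (hm : p.Monic) (hd : p.natDegree = 2) {r : L} (hr : aeval r p = 0) :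
    ∃ a b : K⟮r⟯, p.map (algebraMap K K⟮r⟯) = (X - C a) * (X - C b) := by
  have hdF : (p.map (algebraMap K K⟮r⟯)).natDegree = 2 := by rw [natDegree_map, hd]
  have hs : (p.map (algebraMap K K⟮r⟯)).Splits := by
    refine Splits.of_natDegree_eq_two hdF (x := AdjoinSimple.gen K r) ?_
    rw [eval_map_algebraMap]
    exact Subtype.ext (by simpa using hr)
  obtain ⟨a, b, hab⟩ := Multiset.card_eq_two.mp ((splits_iff_card_roots.mp hs).trans hdF)
  exact ⟨a, b, by rw [hs.eq_prod_roots_of_monic (hm.map _), hab]; simp⟩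

section AlgebraOverField

variable {F R : Type*} [Field F] [Ring R] [Algebra F R]

theorem pow_eq_algebraMap_of_mul_sub_eq_zero {x : R} {r s : F}
    (h : (x - algebraMap F R r) * (x - algebraMap F R s) = 0) (hrs : r ≠ s) {m : ℕ}
    (hm : r ^ m = s ^ m) : x ^ m = algebraMap F R (r ^ m) := by
  have hcop : IsCoprime (X - C r) (X - C s) :=
    isCoprime_X_sub_C_of_isUnit_sub (sub_ne_zero.mpr hrs).isUnit
  obtain ⟨q, hq⟩ : (X - C r) * (X - C s) ∣ X ^ m - C (r ^ m) :=
    hcop.mul_dvd (dvd_iff_isRoot.mpr (by simp)) (dvd_iff_isRoot.mpr (by simp [hm]))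
  simpa [h, sub_eq_zero] using congrArg (aeval x) hq

theorem algebraMap_add_pow_succ_of_sq_eq_zero {N : R} (hN : N ^ 2 = 0) (r : F) (n : ℕ) :
    (algebraMap F R r + N) ^ (n + 1) = algebraMap F R (r ^ (n + 1)) + ((n + 1) * r ^ n) • N := by
  induction n with
  | zero => simp
  | succ n ih =>
    rw [pow_succ, ih]
    rw [sq] at hN
    simp only [add_mul, mul_add, smul_mul_assoc, hN, smul_zero, ← Algebra.commutes r N,
      ← Algebra.smul_def, ← map_mul, ← pow_succ]
    push_cast
    module

theorem eq_algebraMap_of_sub_sq_eq_zero [CharZero F] {x : R} {r : F}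
    (h : (x - algebraMap F R r) ^ 2 = 0) (hr : r ≠ 0) {n : ℕ} (hn : n ≠ 0)
    (hx : x ^ n = algebraMap F R (r ^ n)) : x = algebraMap F R r := by
  obtain ⟨k, rfl⟩ := Nat.exists_eq_succ_of_ne_zero hn
  have hcoef : ((k + 1 : F) * r ^ k) ≠ 0 :=
    mul_ne_zero (by exact_mod_cast k.succ_ne_zero) (pow_ne_zero _ hr)
  have hpow := algebraMap_add_pow_succ_of_sq_eq_zero h r k
  rw [add_sub_cancel, hx, left_eq_add] at hpow
  exact sub_eq_zero.mp ((smul_eq_zero.mp hpow).resolve_left hcoef)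

theorem pow_eq_algebraMap_of_pow_eq_pow [CharZero F] {x : R} {r s : F}
    (h : (x - algebraMap F R r) * (x - algebraMap F R s) = 0) (hr : r ≠ 0) {n : ℕ} (hn : n ≠ 0)
    (hx : x ^ n = algebraMap F R (r ^ n)) {m : ℕ} (hm : r ^ m = s ^ m) :
    x ^ m = algebraMap F R (r ^ m) := by
  rcases eq_or_ne r s with rfl | hrs
  · rw [eq_algebraMap_of_sub_sq_eq_zero (by rwa [sq]) hr hn hx, map_pow]
  · exact pow_eq_algebraMap_of_mul_sub_eq_zero h hrs hm

end AlgebraOverField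

theorem Matrix.pow_eq_of_isRoot_charpoly {F ι : Type*} [Field F] [Fintype ι] [DecidableEq ι]
    [Nonempty ι] {M : Matrix ι ι F} {r c : F} (hr : M.charpoly.IsRoot r) {n : ℕ}
    (hM : M ^ n = algebraMap F _ c) : r ^ n = c := by
  have := spectrum.pow_mem_pow M n (mem_spectrum_iff_isRoot_charpoly.mpr hr)
  rwa [hM, spectrum.scalar_eq, Set.mem_singleton_iff] at this

namespace Matrix.GeneralLinearGroup

section Map

variable {n : Type*} [Fintype n] [DecidableEq n] {K F : Type*} [CommRing K] [CommRing F]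

theorem map_mem_center_iff {f : K →+* F} (hf : Function.Injective f) {g : GL n K} :
    map f g ∈ Subgroup.center (GL n F) ↔ g ∈ Subgroup.center (GL n K) := by
  refine ⟨fun h ↦ Subgroup.mem_center_iff.mpr fun k ↦ Units.ext ?_, fun h ↦ map_center_le f h⟩
  apply Matrix.map_injective hf
  simpa [Units.ext_iff, Matrix.map_mul] using Subgroup.mem_center_iff.mp h (map f k)

theorem orderOf_mk_map {f : K →+* F} (hf : Function.Injective f) (g : GL n K) :
    orderOf (map f g : GL n F ⧸ Subgroup.center (GL n F)) =
      orderOf (g : GL n K ⧸ Subgroup.center (GL n K)) := by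
  refine orderOf_eq_orderOf_iff.mpr fun m ↦ ?_
  simp only [← QuotientGroup.mk_pow, QuotientGroup.eq_one_iff, ← map_pow, map_mem_center_iff hf]

theorem mk_pow_eq_one_iff {g : GL n K} {m : ℕ} :
    (g : GL n K ⧸ Subgroup.center (GL n K)) ^ m = 1 ↔
      ∃ c : K, (g : Matrix n n K) ^ m = algebraMap K _ c := by
  rw [← QuotientGroup.mk_pow, QuotientGroup.eq_one_iff, mem_center_iff_val_mem_range_scalar]
  exact exists_congr fun c ↦ by rw [eq_comm]; rfl

end Map

theorem orderOf_mk_eq_orderOf_div {F : Type*} [Field F] [CharZero F] {g : GL (Fin 2) F}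
    {r s : F} (hχ : (g : Matrix (Fin 2) (Fin 2) F).charpoly = (X - C r) * (X - C s))
    (hg : IsOfFinOrder (g : GL (Fin 2) F ⧸ Subgroup.center (GL (Fin 2) F))) :
    orderOf (g : GL (Fin 2) F ⧸ Subgroup.center (GL (Fin 2) F)) = orderOf (r / s) := by
  set M := (g : Matrix (Fin 2) (Fin 2) F)
  have hr : M.charpoly.IsRoot r := by simp [hχ]
  have hs : M.charpoly.IsRoot s := by simp [hχ]
  have hr0 : r ≠ 0 := fun h ↦
    g.zero_notMem_spectrum F (h ▸ mem_spectrum_iff_isRoot_charpoly.mpr hr)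
  have hs0 : s ≠ 0 := fun h ↦
    g.zero_notMem_spectrum F (h ▸ mem_spectrum_iff_isRoot_charpoly.mpr hs)
  have hCH : (M - algebraMap F _ r) * (M - algebraMap F _ s) = 0 := by
    simpa [hχ] using M.aeval_self_charpoly
  obtain ⟨n, hn, hgn⟩ := hg.exists_pow_eq_one
  obtain ⟨c, hc⟩ := mk_pow_eq_one_iff.mp hgn
  refine orderOf_eq_orderOf_iff.mpr fun m ↦ ?_
  rw [mk_pow_eq_one_iff, div_pow, div_eq_one_iff_eq (pow_ne_zero m hs0)]
  constructor
  · rintro ⟨c, hc⟩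
    rw [pow_eq_of_isRoot_charpoly hr hc, pow_eq_of_isRoot_charpoly hs hc]
  · intro hm
    exact ⟨_, pow_eq_algebraMap_of_pow_eq_pow hCH hr0 hn.ne'
      (by rw [hc, pow_eq_of_isRoot_charpoly hr hc]) hm⟩

end Matrix.GeneralLinearGroup

open Matrix Matrix.GeneralLinearGroup IntermediateField in
/-- Let `K` be a number field of degree `d` over `ℚ`. Every element of finite order in
`PGL₂(K) = GL₂(K)/Z(GL₂(K))` has order at most `2 + 4d²`. -/
theorem pgl2_order_bound (K : Type*) [Field K] [NumberField K]
    (x : Matrix.GeneralLinearGroup (Fin 2) K ⧸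
      Subgroup.center (Matrix.GeneralLinearGroup (Fin 2) K))
    (hx : IsOfFinOrder x) :
    orderOf x ≤ 2 + 4 * (Module.finrank ℚ K) ^ 2 := by
  obtain ⟨g, rfl⟩ := QuotientGroup.mk_surjective x
  set χ := (g : Matrix (Fin 2) (Fin 2) K).charpoly
  have hχ : χ.natDegree = 2 := by simp [χ]
  obtain ⟨r, hr⟩ := IsAlgClosed.exists_aeval_eq_zero (AlgebraicClosure K) χ
    (by rw [degree_eq_natDegree (charpoly_monic _).ne_zero, hχ]; decide)
  have hint : IsIntegral K r := ⟨χ, charpoly_monic _, hr⟩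
  have : FiniteDimensional K K⟮r⟯ := adjoin.finiteDimensional hint
  have : FiniteDimensional ℚ K⟮r⟯ := Module.Finite.trans K K⟮r⟯
  obtain ⟨a, b, hab⟩ := exists_map_adjoin_eq_X_sub_C_mul_X_sub_C (charpoly_monic _) hχ hr
  have hinj := (algebraMap K K⟮r⟯).injective
  have hab' : (map (algebraMap K K⟮r⟯) g : Matrix (Fin 2) (Fin 2) K⟮r⟯).charpoly =
      (X - C a) * (X - C b) := (charpoly_map _ _).trans hab
  have hord : orderOf (g : GL (Fin 2) K ⧸ Subgroup.center (GL (Fin 2) K)) = orderOf (a / b) := by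
    rw [← orderOf_mk_map hinj]
    exact orderOf_mk_eq_orderOf_div hab'
      (orderOf_pos_iff.mp (orderOf_mk_map hinj g ▸ hx.orderOf_pos))
  have hfin : IsOfFinOrder (a / b) := orderOf_pos_iff.mp (hord ▸ hx.orderOf_pos)
  have htot : (orderOf (a / b)).totient ≤ Module.finrank ℚ K * 2 := calc
    _ ≤ Module.finrank ℚ K⟮r⟯ := (IsPrimitiveRoot.orderOf _).totient_le_finrank hfin.orderOf_pos
    _ = Module.finrank ℚ K * Module.finrank K K⟮r⟯ := (Module.finrank_mul_finrank ℚ K K⟮r⟯).symm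
    _ ≤ Module.finrank ℚ K * 2 := by
      gcongr
      exact hχ ▸ finrank_adjoin_simple_le_natDegree (charpoly_monic _) hr
  calc orderOf _ = orderOf (a / b) := hord
    _ ≤ (orderOf (a / b)).totient ^ 2 + 2 := Nat.le_totient_sq_add_two _
    _ ≤ (Module.finrank ℚ K * 2) ^ 2 + 2 := by gcongr
    _ = 2 + 4 * Module.finrank ℚ K ^ 2 := by ring
end

section
/- Let L be a field and suppose given elements y₁,…,y₅ ∈ L and nonzero T₁, T₂, T₃, T₄ ∈ L, and units v₁,…,v₁₀ ∈ L* satisfying the ten relations: y₁ − T₁y₂ = v₁, y₂ − T₂y₃ = v₂, y₁ − T₁T₂y₃ = v₃, y₃ − T₃y₄ = v₄, y₂ − T₂T₃y₄ = v₅, y₁ − T₁T₂T₃y₄ = v₆, y₂ − T₂T₃T₄y₅ = v₇, y₁ − T₁T₂T₃T₄y₅ = v₈, y₃ − T₃T₄y₅ = v₉, y₄ − T₄y₅ = v₁₀. Then T₁ = v₃/v₂ − v₁/v₂ = v₆/v₅ − v₁/v₅ = v₈/v₇ − v₁/v₇, and at least two of these three representations of T₁ as a difference of two ratios are distinct as unordered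 pairs: not all three pairs {v₃/v₂, −v₁/v₂}, {v₆/v₅, −v₁/v₅}, {v₈/v₇, −v₁/v₇} coincide. -/
/-!
Eliminating the `yᵢ`, the relations give `v₃ - v₁ = T₁ v₂`, `v₆ - v₁ = T₁ v₅`, `v₈ - v₁ = T₁ v₇`,
which are the three representations of `T₁`, and `v₅ - v₂ = T₂ v₄`, `v₇ - v₂ = T₂ v₉`,
`v₇ - v₅ = T₂ T₃ v₁₀`, so the denominators `v₂, v₅, v₇` are pairwise distinct. Two representations
with distinct denominators can then only coincide crosswise, `-(v₁/u) = b/w`; if all three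
coincided, chaining the two crosswise identities would give `v₁/v₂ = v₁/v₇`, i.e. `v₂ = v₇`.
-/

theorem Multiset.pair_eq_pair_iff {α : Type*} {a b c d : α} :
    ({a, b} : Multiset α) = {c, d} ↔ a = c ∧ b = d ∨ a = d ∧ b = c := by
  change (([a, b] : List α) : Multiset α) = ([c, d] : List α) ↔ _
  rw [Multiset.coe_eq_coe, List.pair_perm]
  simp only [List.cons.injEq, and_true]
  grind

section DivisionRing

variable {K : Type*} [DivisionRing K] {a b c d u v w t : K}

theorem div_right_inj₀ (hc : c ≠ 0) : c / u = c / v ↔ u = v := by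
  rw [div_eq_mul_inv, div_eq_mul_inv, mul_right_inj' hc, inv_inj]

theorem eq_div_sub_div_of_sub_eq_mul (hu : u ≠ 0) (h : a - c = t * u) : t = a / u - c / u := by
  rw [div_sub_div_same, eq_div_iff hu, h]

theorem neg_div_eq_div_of_pair_eq_pair (hc : c ≠ 0) (huv : u ≠ v)
    (h : ({a / u, -(c / u)} : Multiset K) = {b / v, -(c / v)}) : -(c / u) = b / v := by
  rcases Multiset.pair_eq_pair_iff.mp h with ⟨-, hneg⟩ | ⟨-, hcross⟩
  · exact absurd ((div_right_inj₀ hc).mp (neg_injective hneg)) huv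
  · exact hcross

theorem not_pair_eq_pair_and_pair_eq_pair (hc : c ≠ 0) (huv : u ≠ v) (hvw : v ≠ w)
    (huw : u ≠ w) :
    ¬(({a / u, -(c / u)} : Multiset K) = {b / v, -(c / v)} ∧
      ({b / v, -(c / v)} : Multiset K) = {d / w, -(c / w)}) := by
  rintro ⟨h₁, h₂⟩
  have hcross : -(c / u) = -(c / w) :=
    (neg_div_eq_div_of_pair_eq_pair hc huv h₁).trans
      (neg_div_eq_div_of_pair_eq_pair hc hvw.symm h₂.symm).symm
  exact huw ((div_right_inj₀ hc).mp (neg_injective hcross))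

end DivisionRing

theorem two_essentially_different_representations_general {L : Type*} [Field L]
    (y₁ y₂ y₃ y₄ y₅ : L) (T₁ T₂ T₃ T₄ : L)
    (hT₂ : T₂ ≠ 0) (hT₃ : T₃ ≠ 0)
    (v₁ v₂ v₃ v₄ v₅ v₆ v₇ v₈ v₉ v₁₀ : L)
    (hv₁ : v₁ ≠ 0) (hv₂ : v₂ ≠ 0) (hv₄ : v₄ ≠ 0) (hv₅ : v₅ ≠ 0)
    (hv₇ : v₇ ≠ 0) (hv₉ : v₉ ≠ 0) (hv₁₀ : v₁₀ ≠ 0)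
    (e₁ : y₁ - T₁ * y₂ = v₁)
    (e₂ : y₂ - T₂ * y₃ = v₂)
    (e₃ : y₁ - T₁ * T₂ * y₃ = v₃)
    (e₄ : y₃ - T₃ * y₄ = v₄)
    (e₅ : y₂ - T₂ * T₃ * y₄ = v₅)
    (e₆ : y₁ - T₁ * T₂ * T₃ * y₄ = v₆)
    (e₇ : y₂ - T₂ * T₃ * T₄ * y₅ = v₇)
    (e₈ : y₁ - T₁ * T₂ * T₃ * T₄ * y₅ = v₈)
    (e₉ : y₃ - T₃ * T₄ * y₅ = v₉)
    (e₁₀ : y₄ - T₄ * y₅ = v₁₀) :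
    T₁ = v₃ / v₂ - v₁ / v₂ ∧ T₁ = v₆ / v₅ - v₁ / v₅ ∧ T₁ = v₈ / v₇ - v₁ / v₇ ∧
    ¬(({v₃ / v₂, -(v₁ / v₂)} : Multiset L) = ({v₆ / v₅, -(v₁ / v₅)} : Multiset L) ∧
      ({v₆ / v₅, -(v₁ / v₅)} : Multiset L) = ({v₈ / v₇, -(v₁ / v₇)} : Multiset L)) := by
  have r₂ : v₃ - v₁ = T₁ * v₂ := by linear_combination e₁ - e₃ + T₁ * e₂
  have r₅ : v₆ - v₁ = T₁ * v₅ := by linear_combination e₁ - e₆ + T₁ * e₅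
  have r₇ : v₈ - v₁ = T₁ * v₇ := by linear_combination e₁ - e₈ + T₁ * e₇
  have d₂₅ : v₅ - v₂ = T₂ * v₄ := by linear_combination e₂ - e₅ + T₂ * e₄
  have d₂₇ : v₇ - v₂ = T₂ * v₉ := by linear_combination e₂ - e₇ + T₂ * e₉
  have d₅₇ : v₇ - v₅ = T₂ * T₃ * v₁₀ := by linear_combination e₅ - e₇ + T₂ * T₃ * e₁₀
  have h₂₅ : v₂ ≠ v₅ := (sub_ne_zero.mp (d₂₅ ▸ mul_ne_zero hT₂ hv₄)).symm
  have h₂₇ : v₂ ≠ v₇ := (sub_ne_zero.mp (d₂₇ ▸ mul_ne_zero hT₂ hv₉)).symm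
  have h₅₇ : v₅ ≠ v₇ := (sub_ne_zero.mp (d₅₇ ▸ mul_ne_zero (mul_ne_zero hT₂ hT₃) hv₁₀)).symm
  exact ⟨eq_div_sub_div_of_sub_eq_mul hv₂ r₂, eq_div_sub_div_of_sub_eq_mul hv₅ r₅,
    eq_div_sub_div_of_sub_eq_mul hv₇ r₇, not_pair_eq_pair_and_pair_eq_pair hv₁ h₂₅ h₅₇ h₂₇⟩

/-- The key combinatorial lemma: the ten unit relations force `T₁` to be representable
in at least two essentially different ways as a sum of two units. -/
theorem two_essentially_different_representations {L : Type*} [Field L]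
    (y₁ y₂ y₃ y₄ y₅ : L) (T₁ T₂ T₃ T₄ : L)
    (hT₁ : T₁ ≠ 0) (hT₂ : T₂ ≠ 0) (hT₃ : T₃ ≠ 0) (hT₄ : T₄ ≠ 0)
    (v₁ v₂ v₃ v₄ v₅ v₆ v₇ v₈ v₉ v₁₀ : L)
    (hv₁ : v₁ ≠ 0) (hv₂ : v₂ ≠ 0) (hv₃ : v₃ ≠ 0) (hv₄ : v₄ ≠ 0) (hv₅ : v₅ ≠ 0)
    (hv₆ : v₆ ≠ 0) (hv₇ : v₇ ≠ 0) (hv₈ : v₈ ≠ 0) (hv₉ : v₉ ≠ 0) (hv₁₀ : v₁₀ ≠ 0)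
    (e₁ : y₁ - T₁ * y₂ = v₁)
    (e₂ : y₂ - T₂ * y₃ = v₂)
    (e₃ : y₁ - T₁ * T₂ * y₃ = v₃)
    (e₄ : y₃ - T₃ * y₄ = v₄)
    (e₅ : y₂ - T₂ * T₃ * y₄ = v₅)
    (e₆ : y₁ - T₁ * T₂ * T₃ * y₄ = v₆)
    (e₇ : y₂ - T₂ * T₃ * T₄ * y₅ = v₇)
    (e₈ : y₁ - T₁ * T₂ * T₃ * T₄ * y₅ = v₈)
    (e₉ : y₃ - T₃ * T₄ * y₅ = v₉)
    (e₁₀ : y₄ - T₄ * y₅ = v₁₀) :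
    T₁ = v₃ / v₂ - v₁ / v₂ ∧ T₁ = v₆ / v₅ - v₁ / v₅ ∧ T₁ = v₈ / v₇ - v₁ / v₇ ∧
    ¬(({v₃ / v₂, -(v₁ / v₂)} : Multiset L) = ({v₆ / v₅, -(v₁ / v₅)} : Multiset L) ∧
      ({v₆ / v₅, -(v₁ / v₅)} : Multiset L) = ({v₈ / v₇, -(v₁ / v₇)} : Multiset L)) :=
  two_essentially_different_representations_general y₁ y₂ y₃ y₄ y₅ T₁ T₂ T₃ T₄ hT₂ hT₃ v₁ v₂ v₃ v₄
    v₅ v₆ v₇ v₈ v₉ v₁₀ hv₁ hv₂ hv₄ hv₅ hv₇ hv₉ hv₁₀ e₁ e₂ e₃ e₄ e₅ e₆ e₇ e₈ e₉ e₁₀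
end

section
/- Let v be a discrete valuation on a field K, and let Q_l, Q_{l-1}, …, Q_{l-k} and Q₀ be points of an orbit of a map Φ with good reduction at v (so δ_v(Φ(P),Φ(Q)) ≥ δ_v(P,Q)) in which Q₀ is a fixed point, with Q_{i+1} = Φ(Q_i). Suppose δ_v(Q_{l-i}, Q₀) = δ_v(Q_l, Q₀) for all 0 ≤ i ≤ k. Then δ_v(Q_{l-i}, Q_{l-j}) = δ_v(Q_l, Q₀) for all 0 ≤ j < i ≤ k. -/
/-- If the points `Q_{l-k}, …, Q_l` of an orbit (for a map non-expanding with respect to a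
symmetric ultrametric logarithmic distance `δ`) ending at a fixed point `Q_N` all satisfy
`δ(Q_{l-i}, Q_N) = δ(Q_l, Q_N)`, then `δ(Q_{l-i}, Q_{l-j}) = δ(Q_l, Q_N)` for `j < i ≤ k`. -/
theorem logDist_constant_on_block {X : Type*} (δ : X → X → WithTop ℤ) (Φ : X → X)
    (hsymm : ∀ P Q : X, δ P Q = δ Q P)
    (htri : ∀ P₁ P₂ P₃ : X, min (δ P₁ P₂) (δ P₂ P₃) ≤ δ P₁ P₃)
    (hexp : ∀ P Q : X, δ P Q ≤ δ (Φ P) (Φ Q))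
    (Q : ℕ → X) (horb : ∀ i : ℕ, Q (i + 1) = Φ (Q i))
    (N : ℕ) (hfix : Φ (Q N) = Q N)
    (l k : ℕ) (hkl : k ≤ l) (hlN : l ≤ N)
    (hconst : ∀ i : ℕ, i ≤ k → δ (Q (l - i)) (Q N) = δ (Q l) (Q N)) :
    ∀ i j : ℕ, j < i → i ≤ k → δ (Q (l - i)) (Q (l - j)) = δ (Q l) (Q N) := by
  -- shifting both indices does not decrease δ
  have hshift : ∀ t a b : ℕ, δ (Q a) (Q b) ≤ δ (Q (a + t)) (Q (b + t)) := by
    intro t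
    induction t with
    | zero => intro a b; simp
    | succ t ih =>
      intro a b
      have h1 := ih a b
      have h2 : δ (Q (a + t)) (Q (b + t)) ≤ δ (Q (a + t + 1)) (Q (b + t + 1)) := by
        rw [horb (a + t), horb (b + t)]; exact hexp _ _
      calc δ (Q a) (Q b) ≤ δ (Q (a + t)) (Q (b + t)) := h1
        _ ≤ δ (Q (a + (t + 1))) (Q (b + (t + 1))) := by
            have : a + (t + 1) = a + t + 1 := by ring
            rw [this, show b + (t + 1) = b + t + 1 from by ring]; exact h2
  -- the orbit is constant after N
  have hstab : ∀ n : ℕ, N ≤ n → Q n = Q N := by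
    intro n hn
    induction n with
    | zero => rw [Nat.le_zero.mp hn]
    | succ n ih =>
      rcases Nat.lt_or_ge N (n + 1) with h | h
      · have hNn : N ≤ n := by omega
        rw [horb n, ih hNn, hfix]
      · have : N = n + 1 := by omega
        rw [this]
    
  intro i j hji hik
  set c := δ (Q l) (Q N) with hc
  have hil : i ≤ l := le_trans hik hkl
  have hjl : j ≤ l := by omega
  set m := i - j with hm
  have hm1 : 1 ≤ m := by omega
  have hkey : l - i + m = l - j := by omega
  set d := δ (Q (l - i)) (Q (l - j)) with hd
  -- chain: δ (Q (l-i)) (Q (l-i + s*m)) ≥ d for s ≥ 1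
  have hchain : ∀ s : ℕ, d ≤ δ (Q (l - i)) (Q (l - i + (s + 1) * m)) := by
    intro s
    induction s with
    | zero => simp [hkey, hd]
    | succ s ih =>
      have h1 : d ≤ δ (Q (l - i + (s + 1) * m)) (Q (l - i + (s + 2) * m)) := by
        have := hshift ((s + 1) * m) (l - i) (l - j)
        rw [← hd] at this
        refine le_trans this (le_of_eq ?_)
        have hmm : (s + 2) * m = (s + 1) * m + m := by ring
        congr 2
        omega
      have := htri (Q (l - i)) (Q (l - i + (s + 1) * m)) (Q (l - i + (s + 2) * m))
      have hmin : d ≤ min (δ (Q (l - i)) (Q (l - i + (s + 1) * m)))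
          (δ (Q (l - i + (s + 1) * m)) (Q (l - i + (s + 2) * m))) :=
        le_min ih h1
      exact le_trans hmin this
  -- upper bound: d ≤ c
  have hub : d ≤ c := by
    have hs := hchain N
    have hbig : N ≤ l - i + (N + 1) * m := by
      have : N ≤ (N + 1) * m := by
        calc N ≤ N + 1 := by omega
          _ = (N + 1) * 1 := by ring
          _ ≤ (N + 1) * m := Nat.mul_le_mul_left _ hm1
      omega
    rw [hstab _ hbig] at hs
    calc d ≤ δ (Q (l - i)) (Q N) := hs
      _ = c := hconst i hik
  -- lower bound: c ≤ d
  have hlb : c ≤ d := by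
    have h1 : δ (Q (l - i)) (Q N) = c := hconst i hik
    have h2 : δ (Q N) (Q (l - j)) = c := by rw [hsymm]; exact hconst j (by omega)
    have := htri (Q (l - i)) (Q N) (Q (l - j))
    rw [h1, h2, min_self] at this
    exact this
  exact le_antisymm hub hlb
end

section
/- Let v be a discrete valuation on a field K, Φ a self-map of ℙ¹(K) with δ_v(Φ(P),Φ(Q)) ≥ δ_v(P,Q), and Q₀ = [0:1] a fixed point. Let Q_{n₅}, Q_{n₄}, Q_{n₃}, Q_{n₂}, Q_{n₁} with n₅ < n₄ < n₃ < n₂ < n₁ < 0 be five points of an orbit segment ending at Q₀, with Q_i = [x_i : y_i], min(v(x_i), v(y_i)) = 0. Then there exist T₁, T₂, T₃, T₄ ∈ K with v(T_i) ≥ 0 such that x_{n_i} = T_i · x_{n_{i+1}} for i = 1,2,3,4 (as elements of K, i.e., the valuations satisfy v(x_{n_i}) = v(T_i) + v(x_{n_{i+1}})). -/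
lemma withTop_nonneg_of_add {t c : WithTop ℤ} (hc : c ≠ ⊤) (h : c ≤ t + c) : 0 ≤ t := by
  cases t with
  | top => exact le_top
  | coe t' =>
    cases c with
    | top => exact absurd rfl hc
    | coe c' =>
      rw [← WithTop.coe_add, WithTop.coe_le_coe] at h
      exact_mod_cast le_of_add_le_add_right (by simpa using h : (0:ℤ) + c' ≤ t' + c')

lemma div_step {K : Type*} [Field K] (v : K → WithTop ℤ)
    (hv0 : ∀ x : K, v x = ⊤ ↔ x = 0)
    (hvmul : ∀ x y : K, v (x * y) = v x + v y)
    (a b : K) (h : v a ≤ v b) : ∃ T : K, 0 ≤ v T ∧ b = T * a := by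
  by_cases ha : a = 0
  · refine ⟨1, ?_, ?_⟩
    · have h1 : v 1 ≠ ⊤ := by simp [hv0]
      have : v 1 = v 1 + v 1 := by rw [← hvmul]; norm_num
      cases hv1 : v 1 with
      | top => exact absurd hv1 h1
      | coe c =>
        rw [hv1, ← WithTop.coe_add, WithTop.coe_eq_coe] at this
        have : c = 0 := by omega
        simp [hv1, this]
    · have hva : v a = ⊤ := (hv0 a).mpr ha
      have : v b = ⊤ := top_le_iff.mp (hva ▸ h)
      rw [(hv0 b).mp this, ha]; ring
  · refine ⟨b / a, ?_, by field_simp⟩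
    have hb : v b = v (b / a) + v a := by
      have := hvmul (b / a) a
      rwa [div_mul_cancel₀ b ha] at this
    exact withTop_nonneg_of_add (fun ht => ha ((hv0 a).mp ht)) (hb ▸ h)

/-- Five points `Q_{n₅}, …, Q_{n₁}` (with `n₅ < n₄ < n₃ < n₂ < n₁ < N`) of an orbit segment
ending at the fixed point `Q_N = [0:1]` of a non-expanding map, in `v`-coprime coordinates,
give a chain of divisibilities `x_{n_i} = T_i · x_{n_{i+1}}` with `v(T_i) ≥ 0`. -/
theorem five_points_chain_divisibility {K : Type*} [Field K] (v : K → WithTop ℤ)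
    (hv0 : ∀ x : K, v x = ⊤ ↔ x = 0)
    (hvmul : ∀ x y : K, v (x * y) = v x + v y)
    (hvadd : ∀ x y : K, min (v x) (v y) ≤ v (x + y))
    (hvsurj : ∀ n : ℤ, ∃ x : K, v x = (n : WithTop ℤ))
    (Φ : K × K → K × K)
    (hexp : ∀ P Q : K × K, logDist v P Q ≤ logDist v (Φ P) (Φ Q))
    (N : ℕ) (P : ℕ → K × K)
    (horb : ∀ i : ℕ, i < N → P (i + 1) = Φ (P i))
    (hfix : Φ (P N) = P N) (hQ0 : P N = (0, 1))
    (hcop : ∀ i : ℕ, i ≤ N → min (v (P i).1) (v (P i).2) = 0)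
    (n₁ n₂ n₃ n₄ n₅ : ℕ)
    (h54 : n₅ < n₄) (h43 : n₄ < n₃) (h32 : n₃ < n₂) (h21 : n₂ < n₁) (h1N : n₁ < N) :
    ∃ T₁ T₂ T₃ T₄ : K,
      (0 ≤ v T₁ ∧ (P n₁).1 = T₁ * (P n₂).1) ∧
      (0 ≤ v T₂ ∧ (P n₂).1 = T₂ * (P n₃).1) ∧
      (0 ≤ v T₃ ∧ (P n₃).1 = T₃ * (P n₄).1) ∧
      (0 ≤ v T₄ ∧ (P n₄).1 = T₄ * (P n₅).1) := by
  -- v 1 = 0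
  have hv1 : v 1 = 0 := by
    have h1 : v 1 ≠ ⊤ := by simp [hv0]
    have hh : v 1 = v 1 + v 1 := by rw [← hvmul]; norm_num
    cases hv : v 1 with
    | top => exact absurd hv h1
    | coe c =>
      rw [hv, ← WithTop.coe_add, WithTop.coe_eq_coe] at hh
      have : c = 0 := by omega
      simp [this]
  have hvz : v 0 = ⊤ := (hv0 0).mpr rfl
  -- logDist to the base point computes v of the x-coordinate
  have hld : ∀ i : ℕ, i ≤ N → logDist v (P i) (P N) = v (P i).1 := by
    intro i hi
    rw [logDist, hQ0]
    simp [hvz, hv1, hcop i hi]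
  -- monotonicity along the orbit
  have key : ∀ m n : ℕ, m ≤ n → n ≤ N → v (P m).1 ≤ v (P n).1 := by
    intro m n hmn hnN
    induction n with
    | zero => exact Nat.le_zero.mp hmn ▸ le_rfl
    | succ k ih =>
      rcases Nat.eq_or_lt_of_le hmn with rfl | hlt
      · exact le_rfl
      · have hk : m ≤ k := Nat.lt_succ_iff.mp hlt
        have hkN : k ≤ N := le_of_lt hnN
        refine le_trans (ih hk hkN) ?_
        have h1 : logDist v (P k) (P N) ≤ logDist v (Φ (P k)) (Φ (P N)) := hexp _ _
        rw [hfix, ← horb k (by omega)] at h1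
        rw [hld k hkN, hld (k+1) hnN] at h1
        exact h1
  obtain ⟨T₁, hT₁⟩ := div_step v hv0 hvmul _ _ (key n₂ n₁ (le_of_lt h21) (le_of_lt h1N))
  obtain ⟨T₂, hT₂⟩ := div_step v hv0 hvmul _ _ (key n₃ n₂ (le_of_lt h32) (by omega))
  obtain ⟨T₃, hT₃⟩ := div_step v hv0 hvmul _ _ (key n₄ n₃ (le_of_lt h43) (by omega))
  obtain ⟨T₄, hT₄⟩ := div_step v hv0 hvmul _ _ (key n₅ n₄ (le_of_lt h54) (by omega))
  exact ⟨T₁, T₂, T₃, T₄, hT₁, hT₂, hT₃, hT₄⟩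
end
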